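/- arXiv:2111.15232 — 11 statements merged into one kernel-verified Lean document; each statement's English description precedes it below -/
import Mathlib

section
/- Let A and B be unital rings, B 2-torsion free, and T: A → B a surjective additive map with c = T(1) satisfying 2(T(x)∘T(y)) = T(x∘y)∘c for all x, y ∈ A (where x∘y = xy + yx). If c² lies in the center of B, then c lies in the center of B. -/
/-- If `T : A → B` is surjective additive, `B` is 2-torsion free,
`2(T x ∘ T y) = T (x ∘ y) ∘ c` with `c = T 1`, and `c²` is central, then `c` is central. -/
theorem stmt0 {A B : Type*} [Ring A] [Ring B]
    (htf : ∀ b : B, 2 * b = 0 → b = 0)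
    (T : A → B) (hadd : ∀ x y : A, T (x + y) = T x + T y)
    (hsurj : Function.Surjective T)
    (h : ∀ x y : A, 2 * (T x * T y + T y * T x) =
      T (x * y + y * x) * T 1 + T 1 * T (x * y + y * x))
    (hc2 : (T 1) ^ 2 ∈ Set.center B) :
    T 1 ∈ Set.center B := by
  set c := T 1 with hc
  have hsq : ∀ v : B, v * c ^ 2 = c ^ 2 * v := Semigroup.mem_center_iff.mp hc2
  -- c commutes with anything of the form V*c + c*V
  have L0 : ∀ V : B, c * (V * c + c * V) = (V * c + c * V) * c := by
    intro V
    have h1 : c * (V * c + c * V) = c * V * c + c ^ 2 * V := by noncomm_ring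
    have h2 : (V * c + c * V) * c = V * c ^ 2 + c * V * c := by noncomm_ring
    rw [h1, h2, ← hsq V]
    ring_nf
    noncomm_ring
  -- c commutes with all Jordan products
  have L1 : ∀ u v : B, c * (u * v + v * u) = (u * v + v * u) * c := by
    intro u v
    obtain ⟨xu, hxu⟩ := hsurj u
    obtain ⟨xv, hxv⟩ := hsurj v
    have hE := h xu xv
    rw [hxu, hxv] at hE
    set E := T (xu * xv + xv * xu) with hEdef
    have h2 : 2 * (c * (u * v + v * u)) = 2 * ((u * v + v * u) * c) := by
      calc 2 * (c * (u * v + v * u)) = c * (2 * (u * v + v * u)) := by noncomm_ring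
        _ = c * (E * c + c * E) := by rw [hE]
        _ = (E * c + c * E) * c := L0 E
        _ = (2 * (u * v + v * u)) * c := by rw [← hE]
        _ = 2 * ((u * v + v * u) * c) := by noncomm_ring
    have h3 : 2 * (c * (u * v + v * u) - (u * v + v * u) * c) = 0 := by
      rw [mul_sub, h2, sub_self]
    exact sub_eq_zero.mp (htf _ h3)
  -- e : preimage of 1
  obtain ⟨e, he⟩ := hsurj 1
  set w := T (e * e + e * e) with hwdef
  have hw := h e e
  rw [he] at hw
  have hw4 : w * c + c * w = 4 := by
    rw [← hw]; norm_num
  -- w is central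
  have hwcent : ∀ β : B, w * β = β * w := by
    intro β
    obtain ⟨y, hy⟩ := hsurj β
    have hF := h e y
    rw [he, hy] at hF
    set F := T (e * y + y * e) with hFdef
    have hF4 : F * c + c * F = 4 * β := by
      rw [← hF]; noncomm_ring
    have e2 : w * (F * c + c * F) - (F * c + c * F) * w =
        ((w * c + c * w) * F - F * (w * c + c * w)) -
          (c * (w * F + F * w) - (w * F + F * w) * c) := by noncomm_ring
    have e1 : w * (F * c + c * F) - (F * c + c * F) * w = 4 * (w * β) - 4 * (β * w) := by
      rw [hF4]; noncomm_ring
    have e3 : (w * c + c * w) * F - F * (w * c + c * w) = 0 := by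
      rw [hw4]; noncomm_ring
    have e4 : c * (w * F + F * w) - (w * F + F * w) * c = 0 := by
      rw [L1 w F, sub_self]
    have e5 : 4 * (w * β) - 4 * (β * w) = 0 := by
      rw [← e1, e2, e3, e4, sub_zero]
    have e6 : 2 * (2 * (w * β - β * w)) = 0 := by
      calc 2 * (2 * (w * β - β * w)) = 4 * (w * β) - 4 * (β * w) := by noncomm_ring
        _ = 0 := e5
    exact sub_eq_zero.mp (htf _ (htf _ e6))
  -- c * w = 2
  have hcw : c * w = 2 := by
    have hcc := hw4
    rw [hwcent c] at hcc
    have h1 : 2 * (c * w - 2) = 0 := by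
      rw [mul_sub, two_mul, hcc]
      norm_num
    exact sub_eq_zero.mp (htf _ h1)
  -- conclude
  rw [Semigroup.mem_center_iff]
  intro a
  have key : 2 * (a * c - c * a) = 0 := by
    have h1 : 2 * (a * c) = c * w * (a * c) := by rw [hcw]
    have h2 : c * w * (a * c) = c * (w * a) * c := by noncomm_ring
    have h3 : c * (w * a) * c = c * (a * w) * c := by rw [hwcent a]
    have h4 : c * (a * w) * c = c * a * (w * c) := by noncomm_ring
    have h5 : c * a * (w * c) = c * a * (c * w) := by rw [hwcent c]
    have h6 : c * a * (c * w) = c * a * 2 := by rw [hcw]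
    calc 2 * (a * c - c * a) = 2 * (a * c) - 2 * (c * a) := by noncomm_ring
      _ = c * a * 2 - 2 * (c * a) := by rw [h1, h2, h3, h4, h5, h6]
      _ = 0 := by noncomm_ring
  exact sub_eq_zero.mp (htf _ key)
end

section
/- Let A and B be unital rings, B 2-torsion free, and T: A → B a surjective additive map with c = T(1) satisfying 2(T(x)∘T(y)) = T(x∘y)∘c for all x, y ∈ A. If c lies in the center of B, then c is invertible in B and c·T(x∘y) = T(x)∘T(y) for all x, y ∈ A (i.e., T is a weighted Jordan homomorphism). -/
private lemma cancel4 {B : Type*} [Ring B] (htf : ∀ b : B, 2 * b = 0 → b = 0)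
    {a b : B} (h : 2 * (2 * a) = 2 * (2 * b)) : a = b := by
  have h1 : 2 * (2 * (a - b)) = 0 := by
    rw [mul_sub, mul_sub, h, sub_self]
  have h2 := htf _ h1
  have h3 := htf _ h2
  exact sub_eq_zero.mp h3

private lemma cancel_mid {B : Type*} [Ring B] {a m b n : B}
    (h : a + m + b = a + n + b) : m = n :=
  add_left_cancel (add_right_cancel h)

/-- If `T : A → B` is surjective additive, `B` is 2-torsion free,
`2(T x ∘ T y) = T (x ∘ y) ∘ c` with `c = T 1`, and `c` is central, then `c` is
invertible and `c · T(x ∘ y) = T x ∘ T y`, i.e. `T` is a weighted Jordan homomorphism. -/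
theorem stmt1 {A B : Type*} [Ring A] [Ring B]
    (htf : ∀ b : B, 2 * b = 0 → b = 0)
    (T : A → B) (hadd : ∀ x y : A, T (x + y) = T x + T y)
    (hsurj : Function.Surjective T)
    (h : ∀ x y : A, 2 * (T x * T y + T y * T x) =
      T (x * y + y * x) * T 1 + T 1 * T (x * y + y * x))
    (hc : T 1 ∈ Set.center B) :
    IsUnit (T 1) ∧ ∀ x y : A, T 1 * T (x * y + y * x) = T x * T y + T y * T x := by
  have hcomm : ∀ b : B, T 1 * b = b * T 1 := fun b => hc.comm b
  -- key: T x * T x = T 1 * T (x*x)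
  have key : ∀ x : A, T x * T x = T 1 * T (x * x) := by
    intro x
    apply cancel4 htf
    have h2 := h x x
    rw [hadd (x*x) (x*x)] at h2
    calc 2 * (2 * (T x * T x)) = 2 * (T x * T x + T x * T x) := by noncomm_ring
      _ = (T (x*x) + T (x*x)) * T 1 + T 1 * (T (x*x) + T (x*x)) := h2
      _ = 2 * (T (x*x) * T 1) + 2 * (T 1 * T (x*x)) := by noncomm_ring
      _ = 2 * (T 1 * T (x*x)) + 2 * (T 1 * T (x*x)) := by rw [hcomm]
      _ = 2 * (2 * (T 1 * T (x*x))) := by noncomm_ring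
  have jord : ∀ x y : A, T 1 * T (x * y + y * x) = T x * T y + T y * T x := by
    intro x y
    have k := key (x + y)
    have hsq : (x + y) * (x + y) = x * x + (x * y + y * x) + y * y := by noncomm_ring
    rw [hadd, hsq, hadd, hadd] at k
    have expand : (T x + T y) * (T x + T y)
        = T x * T x + (T x * T y + T y * T x) + T y * T y := by noncomm_ring
    rw [expand, mul_add, mul_add, ← key x, ← key y] at k
    exact (cancel_mid k).symm
  refine ⟨?_, jord⟩
  obtain ⟨u, hu⟩ := hsurj 1
  have h1 : T 1 * T (u * u) = 1 := by rw [← key u, hu, one_mul]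
  exact ⟨⟨T 1, T (u * u), h1, by rw [← hcomm, h1]⟩, rfl⟩
end

section
/- Let A be a unital ring generated as a ring by its idempotents, B an additive abelian group, and φ: A × A → B a biadditive map such that φ(x,y) = 0 whenever xy = 0. Then φ(x,y) = φ(xy, 1) for all x, y ∈ A. -/
/-- If the unital ring `A` is generated by its idempotents and
`φ : A × A → B` is biadditive with `φ(x,y) = 0` whenever `xy = 0`,
then `φ(x,y) = φ(xy, 1)` for all `x, y`. -/
theorem stmt2 {A B : Type*} [Ring A] [AddCommGroup B]
    (hgen : Subring.closure {e : A | IsIdempotentElem e} = ⊤)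
    (φ : A → A → B)
    (h1 : ∀ x x' y : A, φ (x + x') y = φ x y + φ x' y)
    (h2 : ∀ x y y' : A, φ x (y + y') = φ x y + φ x y')
    (h0 : ∀ x y : A, x * y = 0 → φ x y = 0) :
    ∀ x y : A, φ x y = φ (x * y) 1 := by
  -- basic additive facts
  have hL0 : ∀ y : A, φ 0 y = 0 := by
    intro y
    have := h1 0 0 y
    simp only [add_zero] at this
    exact (left_eq_add.mp this)
  have hR0 : ∀ x : A, φ x 0 = 0 := by
    intro x
    have := h2 x 0 0
    simp only [add_zero] at this
    exact (left_eq_add.mp this)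
  have hLsub : ∀ x x' y : A, φ (x - x') y = φ x y - φ x' y := by
    intro x x' y
    have := h1 x' (x - x') y
    rw [add_sub_cancel] at this
    rw [this]; abel
  have hRsub : ∀ x y y' : A, φ x (y - y') = φ x y - φ x y' := by
    intro x y y'
    have := h2 x y' (y - y')
    rw [add_sub_cancel] at this
    rw [this]; abel
  -- key property
  have key : ∀ a x y : A, φ x (a * y) = φ (x * a) y := by
    intro a
    have ha : a ∈ Subring.closure {e : A | IsIdempotentElem e} := by
      rw [hgen]; trivial
    induction ha using Subring.closure_induction with
    | mem e he =>
      intro x y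
      have hee : e * e = e := he
      have hkey : x * e * (e * y) = x * (e * y) := by
        rw [mul_assoc x e (e * y), ← mul_assoc e e y, hee]
      have h1' : φ (x - x * e) (e * y) = 0 := by
        apply h0
        rw [sub_mul, hkey, sub_self]
      have h2' : φ (x * e) (y - e * y) = 0 := by
        apply h0
        rw [mul_sub, hkey, ← mul_assoc, sub_self]
      have e1 := hLsub x (x * e) (e * y)
      have e2 := hRsub (x * e) y (e * y)
      rw [h1'] at e1
      rw [h2'] at e2
      have e1' : φ x (e * y) = φ (x * e) (e * y) := by
        have := e1.symm
        rwa [sub_eq_zero] at this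
      have e2' : φ (x * e) y = φ (x * e) (e * y) := by
        have := e2.symm
        rwa [sub_eq_zero] at this
      rw [e1', e2']
    | one =>
      intro x y; rw [one_mul, mul_one]
    | zero =>
      intro x y; rw [zero_mul, mul_zero, hL0, hR0]
    | add a b _ _ hIa hIb =>
      intro x y
      rw [add_mul, mul_add, h2, h1, hIa, hIb]
    | neg a _ hIa =>
      intro x y
      have l1 : φ x ((-a) * y) = φ x 0 - φ x (a * y) := by
        rw [← hRsub]
        congr 1
        rw [zero_sub, neg_mul]
      have l2 : φ (x * (-a)) y = φ 0 y - φ (x * a) y := by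
        rw [← hLsub]
        congr 1
        rw [zero_sub, mul_neg]
      rw [l1, hR0, l2, hL0, hIa]
    | mul a b _ _ hIa hIb =>
      intro x y
      rw [mul_assoc, hIa, hIb, mul_assoc]
  intro x y
  have := key y x 1
  rwa [mul_one] at this
end

section
/- Let A be a unital ring generated as a ring by its idempotents, B an additive abelian group, and φ: A × A → B a symmetric biadditive map such that φ(x,y) = 0 whenever xy = yx = 0. Then 2φ(x,y) = φ(x∘y, 1) for all x, y ∈ A, where x∘y = xy + yx. -/
/-- If the unital ring `A` is generated by its idempotents and
`φ : A × A → B` is symmetric biadditive with `φ(x,y) = 0` whenever `xy = yx = 0`,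
then `2φ(x,y) = φ(x∘y, 1)` for all `x, y`. -/
theorem stmt3 {A B : Type*} [Ring A] [AddCommGroup B]
    (hgen : Subring.closure {e : A | IsIdempotentElem e} = ⊤)
    (φ : A → A → B)
    (h1 : ∀ x x' y : A, φ (x + x') y = φ x y + φ x' y)
    (h2 : ∀ x y y' : A, φ x (y + y') = φ x y + φ x y')
    (hsymm : ∀ x y : A, φ x y = φ y x)
    (h0 : ∀ x y : A, x * y = 0 → y * x = 0 → φ x y = 0) :
    ∀ x y : A, 2 • φ x y = φ (x * y + y * x) 1 := by
  -- abbreviation for the goal predicate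
  set P : A → A → Prop := fun t y => 2 • φ t y = φ (t * y + y * t) 1 with hP
  suffices hmain : ∀ t y : A, P t y by
    intro x y; exact hmain x y
  -- zero lemmas
  have hz2 : ∀ x : A, φ x 0 = 0 := by
    intro x
    have h := h2 x 0 0
    rw [add_zero] at h
    exact (add_left_cancel ((add_zero (φ x 0)).trans h)).symm
  have hz1 : ∀ y : A, φ 0 y = 0 := fun y => (hsymm 0 y).trans (hz2 y)
  -- symmetry of P
  have Psymm : ∀ t y : A, P t y → P y t := by
    intro t y h
    show 2 • φ y t = φ (y * t + t * y) 1
    rw [hsymm y t, add_comm (y * t)]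
    exact h
  -- orthogonality gives P
  have P0 : ∀ t y : A, t * y = 0 → y * t = 0 → P t y := by
    intro t y hty hyt
    show 2 • φ t y = φ (t * y + y * t) 1
    rw [h0 t y hty hyt, hty, hyt, add_zero, hz1, smul_zero]
  -- additivity of P in the second argument
  have Padd2 : ∀ t y y' : A, P t y → P t y' → P t (y + y') := by
    intro t y y' hy hy'
    show 2 • φ t (y + y') = φ (t * (y + y') + (y + y') * t) 1
    rw [h2, smul_add,
      show t * (y + y') + (y + y') * t = (t * y + y * t) + (t * y' + y' * t) by noncomm_ring,
      h1, hy, hy']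
  have Padd1 : ∀ t t' y : A, P t y → P t' y → P (t + t') y := fun t t' y h h' =>
    Psymm _ _ (Padd2 _ _ _ (Psymm _ _ h) (Psymm _ _ h'))
  -- cancellation
  have Pcancel : ∀ t t' y : A, P (t + t') y → P t y → P t' y := by
    intro t t' y h ht
    have e1 : 2 • φ t y + 2 • φ t' y = φ (t * y + y * t) 1 + φ (t' * y + y * t') 1 := by
      calc 2 • φ t y + 2 • φ t' y = 2 • φ (t + t') y := by rw [h1, smul_add]
        _ = φ ((t + t') * y + y * (t + t')) 1 := h
        _ = φ (t * y + y * t) 1 + φ (t' * y + y * t') 1 := by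
            rw [show (t + t') * y + y * (t + t') = (t * y + y * t) + (t' * y + y * t') by
              noncomm_ring, h1]
    rw [ht] at e1
    exact add_left_cancel e1
  -- P 1 w always holds
  have hP1 : ∀ w : A, P 1 w := by
    intro w
    show 2 • φ 1 w = φ (1 * w + w * 1) 1
    rw [one_mul, mul_one, h1, two_smul, hsymm (1 : A) w]
  -- for an idempotent f : φ f f = φ f 1
  have hstep : ∀ f : A, f * f = f → φ f f = φ f 1 := by
    intro f hf
    have hff : f * (1 - f) = 0 := by rw [mul_sub, mul_one, hf, sub_self]
    have hff' : (1 - f) * f = 0 := by rw [sub_mul, one_mul, hf, sub_self]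
    have h := h2 f (1 - f) f
    rw [show (1 : A) - f + f = 1 by abel, h0 f (1 - f) hff hff', zero_add] at h
    exact h.symm
  -- corner lemma: e idempotent, e*u = u, u*e = 0, u*u = 0 ⇒ P e u
  have hcorner : ∀ e u : A, e * e = e → e * u = u → u * e = 0 → u * u = 0 → P e u := by
    intro e u he heu hue hu2
    have hfid : (e + u) * (e + u) = e + u := by
      rw [show (e + u) * (e + u) = e * e + e * u + u * e + u * u by noncomm_ring,
        he, heu, hue, hu2, add_zero, add_zero]
    have e1 : φ (e + u) (e + u) = φ (e + u) 1 := hstep _ hfid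
    rw [h1, h2, h2, h1, h0 u u hu2 hu2, hsymm u e, hstep e he] at e1
    have e2 : φ e 1 + (φ e u + φ e u) = φ e 1 + φ u 1 := by rw [← e1]; abel
    show 2 • φ e u = φ (e * u + u * e) 1
    rw [heu, hue, add_zero, two_smul]
    exact add_left_cancel e2
  -- the main idempotent lemma : P e y for all y
  have hid : ∀ e : A, e * e = e → ∀ y : A, P e y := by
    intro e he y
    have he1 : e * (1 - e) = 0 := by rw [mul_sub, mul_one, he, sub_self]
    have h1e : (1 - e) * e = 0 := by rw [sub_mul, one_mul, he, sub_self]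
    have hfe : (1 - e) * (1 - e) = 1 - e := by
      rw [show (1 - e) * (1 - e) = 1 - e - e + e * e by noncomm_ring, he]; abel
    have pA : P e (e * y * e) := by
      have horth : (1 - e) * (e * y * e) = 0 := by
        rw [show (1 - e) * (e * y * e) = ((1 - e) * e) * (y * e) by noncomm_ring, h1e, zero_mul]
      have horth' : (e * y * e) * (1 - e) = 0 := by
        rw [show (e * y * e) * (1 - e) = (e * y) * (e * (1 - e)) by noncomm_ring, he1, mul_zero]
      have p1 : P (1 - e) (e * y * e) := P0 _ _ horth horth'
      have pc : P ((1 - e) + e) (e * y * e) := by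
        rw [show (1 : A) - e + e = 1 by abel]; exact hP1 _
      exact Pcancel _ _ _ pc p1
    have pB : P e (e * y * (1 - e)) := by
      refine hcorner e _ he ?_ ?_ ?_
      · rw [show e * (e * y * (1 - e)) = (e * e) * (y * (1 - e)) by noncomm_ring, he,
          ← mul_assoc]
      · rw [show (e * y * (1 - e)) * e = (e * y) * ((1 - e) * e) by noncomm_ring, h1e, mul_zero]
      · rw [show (e * y * (1 - e)) * (e * y * (1 - e))
            = (e * y) * (((1 - e) * e) * (y * (1 - e))) by noncomm_ring, h1e, zero_mul, mul_zero]
    have pC : P e ((1 - e) * y * e) := by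
      have pv : P (1 - e) ((1 - e) * y * e) := by
        refine hcorner (1 - e) _ hfe ?_ ?_ ?_
        · rw [show (1 - e) * ((1 - e) * y * e) = ((1 - e) * (1 - e)) * (y * e) by noncomm_ring,
            hfe, ← mul_assoc]
        · rw [show ((1 - e) * y * e) * (1 - e) = ((1 - e) * y) * (e * (1 - e)) by noncomm_ring,
            he1, mul_zero]
        · rw [show ((1 - e) * y * e) * ((1 - e) * y * e)
              = ((1 - e) * y) * ((e * (1 - e)) * (y * e)) by noncomm_ring, he1, zero_mul,
            mul_zero]
      have pc : P ((1 - e) + e) ((1 - e) * y * e) := by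
        rw [show (1 : A) - e + e = 1 by abel]; exact hP1 _
      exact Pcancel _ _ _ pc pv
    have pD : P e ((1 - e) * y * (1 - e)) := by
      refine P0 _ _ ?_ ?_
      · rw [show e * ((1 - e) * y * (1 - e)) = (e * (1 - e)) * (y * (1 - e)) by noncomm_ring,
          he1, zero_mul]
      · rw [show ((1 - e) * y * (1 - e)) * e = ((1 - e) * y) * ((1 - e) * e) by noncomm_ring,
          h1e, mul_zero]
    have hdec : y = e * y * e + (e * y * (1 - e) + ((1 - e) * y * e + (1 - e) * y * (1 - e))) := by
      noncomm_ring
    rw [show P e y = P e (e * y * e + (e * y * (1 - e) + ((1 - e) * y * e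
        + (1 - e) * y * (1 - e)))) from by rw [← hdec]]
    exact Padd2 _ _ _ pA (Padd2 _ _ _ pB (Padd2 _ _ _ pC pD))
  -- corner compression : if P a holds for all second arguments, so does P (e*a*e)
  have hcomp : ∀ e a : A, e * e = e → (∀ w, P a w) → ∀ y, P (e * a * e) y := by
    intro e a he ha y
    have he1 : e * (1 - e) = 0 := by rw [mul_sub, mul_one, he, sub_self]
    have h1e : (1 - e) * e = 0 := by rw [sub_mul, one_mul, he, sub_self]
    have hfe : (1 - e) * (1 - e) = 1 - e := by
      rw [show (1 - e) * (1 - e) = 1 - e - e + e * e by noncomm_ring, he]; abel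
    -- off-diagonal corners of any z satisfy P in the first slot
    have hoffB : ∀ z w : A, P (e * z * (1 - e)) w := by
      intro z w
      have hu : ∀ v : A, P (e + e * z * (1 - e)) v := by
        intro v
        refine hid _ ?_ v
        rw [show (e + e * z * (1 - e)) * (e + e * z * (1 - e))
            = e * e + e * (e * z * (1 - e)) + (e * z * (1 - e)) * e
              + (e * z * (1 - e)) * (e * z * (1 - e)) by noncomm_ring]
        rw [show e * (e * z * (1 - e)) = (e * e) * (z * (1 - e)) by noncomm_ring, he]
        rw [show (e * z * (1 - e)) * e = (e * z) * ((1 - e) * e) by noncomm_ring, h1e, mul_zero]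
        rw [show (e * z * (1 - e)) * (e * z * (1 - e))
            = (e * z) * (((1 - e) * e) * (z * (1 - e))) by noncomm_ring, h1e, zero_mul, mul_zero]
        rw [add_zero, add_zero, ← mul_assoc]
      exact Pcancel e _ w (hu w) (hid e he w)
    have hoffC : ∀ z w : A, P ((1 - e) * z * e) w := by
      intro z w
      have hu : ∀ v : A, P ((1 - e) + (1 - e) * z * e) v := by
        intro v
        refine hid _ ?_ v
        rw [show ((1 - e) + (1 - e) * z * e) * ((1 - e) + (1 - e) * z * e)
            = (1 - e) * (1 - e) + (1 - e) * ((1 - e) * z * e) + ((1 - e) * z * e) * (1 - e)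
              + ((1 - e) * z * e) * ((1 - e) * z * e) by noncomm_ring]
        rw [show (1 - e) * ((1 - e) * z * e) = ((1 - e) * (1 - e)) * (z * e) by noncomm_ring, hfe]
        rw [show ((1 - e) * z * e) * (1 - e) = ((1 - e) * z) * (e * (1 - e)) by noncomm_ring,
          he1, mul_zero]
        rw [show ((1 - e) * z * e) * ((1 - e) * z * e)
            = ((1 - e) * z) * ((e * (1 - e)) * (z * e)) by noncomm_ring, he1, zero_mul, mul_zero]
        rw [add_zero, add_zero, ← mul_assoc]
      exact Pcancel (1 - e) _ w (hu w) (hid (1 - e) hfe w)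
    -- P (e*a*e) on each Peirce component of y
    have q1 : P (e * a * e) (e * y * e) := by
      -- from P a (e*y*e), subtracting the three other corners of a
      have t0 : P a (e * y * e) := ha _
      have tB : P (e * a * (1 - e)) (e * y * e) := hoffB a _
      have tC : P ((1 - e) * a * e) (e * y * e) := hoffC a _
      have tD : P ((1 - e) * a * (1 - e)) (e * y * e) := by
        refine P0 _ _ ?_ ?_
        · rw [show ((1 - e) * a * (1 - e)) * (e * y * e)
              = ((1 - e) * a) * (((1 - e) * e) * (y * e)) by noncomm_ring, h1e, zero_mul,
            mul_zero]
        · rw [show (e * y * e) * ((1 - e) * a * (1 - e))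
              = (e * y) * ((e * (1 - e)) * (a * (1 - e))) by noncomm_ring, he1, zero_mul,
            mul_zero]
      have tRest : P (e * a * (1 - e) + ((1 - e) * a * e + (1 - e) * a * (1 - e))) (e * y * e) :=
        Padd1 _ _ _ tB (Padd1 _ _ _ tC tD)
      have hdeca : a = e * a * e + (e * a * (1 - e) + ((1 - e) * a * e
          + (1 - e) * a * (1 - e))) := by noncomm_ring
      have t0' : P (e * a * e + (e * a * (1 - e) + ((1 - e) * a * e
          + (1 - e) * a * (1 - e)))) (e * y * e) := by rw [← hdeca]; exact t0
      have t0'' : P ((e * a * (1 - e) + ((1 - e) * a * e + (1 - e) * a * (1 - e)))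
          + e * a * e) (e * y * e) := by
        rw [add_comm] at t0'; exact t0'
      exact Pcancel _ _ _ t0'' tRest
    have q2 : P (e * a * e) (e * y * (1 - e)) := Psymm _ _ (hoffB y _)
    have q3 : P (e * a * e) ((1 - e) * y * e) := Psymm _ _ (hoffC y _)
    have q4 : P (e * a * e) ((1 - e) * y * (1 - e)) := by
      refine P0 _ _ ?_ ?_
      · rw [show (e * a * e) * ((1 - e) * y * (1 - e))
            = (e * a) * ((e * (1 - e)) * (y * (1 - e))) by noncomm_ring, he1, zero_mul, mul_zero]
      · rw [show ((1 - e) * y * (1 - e)) * (e * a * e)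
            = ((1 - e) * y) * (((1 - e) * e) * (a * e)) by noncomm_ring, h1e, zero_mul, mul_zero]
    have hdec : y = e * y * e + (e * y * (1 - e) + ((1 - e) * y * e
        + (1 - e) * y * (1 - e))) := by noncomm_ring
    rw [show P (e * a * e) y = P (e * a * e) (e * y * e + (e * y * (1 - e) + ((1 - e) * y * e
        + (1 - e) * y * (1 - e)))) from by rw [← hdec]]
    exact Padd2 _ _ _ q1 (Padd2 _ _ _ q2 (Padd2 _ _ _ q3 q4))
  -- left multiplication by an idempotent preserves the property
  have hleft : ∀ e a : A, e * e = e → (∀ w, P a w) → ∀ y, P (e * a) y := by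
    intro e a he ha y
    have he1 : e * (1 - e) = 0 := by rw [mul_sub, mul_one, he, sub_self]
    have h1e : (1 - e) * e = 0 := by rw [sub_mul, one_mul, he, sub_self]
    have hB : P (e * a * (1 - e)) y := by
      -- reuse hoffB-style argument
      have hu : ∀ v : A, P (e + e * a * (1 - e)) v := by
        intro v
        refine hid _ ?_ v
        rw [show (e + e * a * (1 - e)) * (e + e * a * (1 - e))
            = e * e + e * (e * a * (1 - e)) + (e * a * (1 - e)) * e
              + (e * a * (1 - e)) * (e * a * (1 - e)) by noncomm_ring]
        rw [show e * (e * a * (1 - e)) = (e * e) * (a * (1 - e)) by noncomm_ring, he]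
        rw [show (e * a * (1 - e)) * e = (e * a) * ((1 - e) * e) by noncomm_ring, h1e, mul_zero]
        rw [show (e * a * (1 - e)) * (e * a * (1 - e))
            = (e * a) * (((1 - e) * e) * (a * (1 - e))) by noncomm_ring, h1e, zero_mul, mul_zero]
        rw [add_zero, add_zero, ← mul_assoc]
      exact Pcancel e _ y (hu y) (hid e he y)
    have hA : P (e * a * e) y := hcomp e a he ha y
    have hsum : P (e * a * e + e * a * (1 - e)) y := Padd1 _ _ _ hA hB
    have hdec : e * a = e * a * e + e * a * (1 - e) := by noncomm_ring
    rw [show P (e * a) y = P (e * a * e + e * a * (1 - e)) y from by rw [← hdec]]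
    exact hsum
  -- main induction over the subring closure
  intro t
  have ht : t ∈ Subring.closure {e : A | IsIdempotentElem e} := by rw [hgen]; trivial
  have key : (∀ w, P t w) ∧ (∀ a : A, (∀ w, P a w) → ∀ w, P (t * a) w) := by
    refine Subring.closure_induction
      (p := fun x _ => (∀ w, P x w) ∧ (∀ a : A, (∀ w, P a w) → ∀ w, P (x * a) w))
      ?_ ?_ ?_ ?_ ?_ ?_ ht
    · intro e he
      exact ⟨hid e he, fun a ha w => hleft e a he ha w⟩
    · constructor
      · intro w; exact P0 0 w (zero_mul w) (mul_zero w)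
      · intro a ha w
        rw [show P (0 * a) w = P 0 w from by rw [zero_mul]]
        exact P0 0 w (zero_mul w) (mul_zero w)
    · constructor
      · exact hP1
      · intro a ha w
        rw [show P (1 * a) w = P a w from by rw [one_mul]]
        exact ha w
    · intro x y _ _ hx hy
      constructor
      · intro w; exact Padd1 _ _ _ (hx.1 w) (hy.1 w)
      · intro a ha w
        rw [show P ((x + y) * a) w = P (x * a + y * a) w from by rw [add_mul]]
        exact Padd1 _ _ _ (hx.2 a ha w) (hy.2 a ha w)
    · intro x _ hx
      have hneg : ∀ z : A, (∀ w, P z w) → ∀ w, P (-z) w := by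
        intro z hz w
        have h0' : P (z + -z) w := by
          rw [show z + -z = (0 : A) by abel]
          exact P0 0 w (zero_mul w) (mul_zero w)
        exact Pcancel _ _ _ h0' (hz w)
      constructor
      · exact hneg x hx.1
      · intro a ha w
        rw [show P (-x * a) w = P (-(x * a)) w from by rw [neg_mul]]
        exact hneg _ (hx.2 a ha) w
    · intro x y _ _ hx hy
      constructor
      · exact hx.2 y hy.1
      · intro a ha w
        rw [show P (x * y * a) w = P (x * (y * a)) w from by rw [mul_assoc]]
        exact hx.2 _ (hy.2 a ha) w
  exact key.1
end

section
/- Let A and B be unital rings such that A is additively spanned by Jordan products e∘f of idempotents e, f ∈ A, and 2 is invertible in B. If T: A → B is a surjective additive map such that T(x)∘T(y) = 0 whenever xy = yx = 0, then T is a weighted Jordan homomorphism: c = T(1) is central and invertible in B, and c·T(x∘y) = T(x)∘T(y) for all x, y ∈ A. -/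
namespace Stmt4Aux

variable {A B : Type*} [Ring A] [Ring B]

/-- The defect of the weighted Jordan identity. -/
private def DD (T : A → B) (u v : A) : B :=
  T 1 * T (u * v + v * u) + T (u * v + v * u) * T 1 - 2 * (T u * T v + T v * T u)

private theorem T_zero (T : A → B) (hadd : ∀ x y : A, T (x + y) = T x + T y) : T 0 = 0 := by
  have h := hadd 0 0
  rw [add_zero] at h
  have h2 : T 0 + 0 = T 0 + T 0 := by rw [add_zero]; exact h
  exact (add_left_cancel h2).symm

private theorem T_neg (T : A → B) (hadd : ∀ x y : A, T (x + y) = T x + T y) (x : A) :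
    T (-x) = -T x := by
  have h := hadd x (-x)
  rw [show x + -x = (0 : A) from by abel, T_zero T hadd] at h
  exact eq_neg_of_add_eq_zero_right h.symm

private theorem DD_add_left (T : A → B) (hadd : ∀ x y : A, T (x + y) = T x + T y)
    (x₁ x₂ y : A) : DD T (x₁ + x₂) y = DD T x₁ y + DD T x₂ y := by
  unfold DD
  rw [show (x₁ + x₂) * y + y * (x₁ + x₂) = (x₁ * y + y * x₁) + (x₂ * y + y * x₂) from by
    noncomm_ring]
  rw [hadd (x₁ * y + y * x₁) (x₂ * y + y * x₂), hadd x₁ x₂]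
  noncomm_ring

private theorem DD_neg_left (T : A → B) (hadd : ∀ x y : A, T (x + y) = T x + T y)
    (x y : A) : DD T (-x) y = -DD T x y := by
  unfold DD
  rw [show (-x) * y + y * (-x) = -(x * y + y * x) from by noncomm_ring]
  rw [T_neg T hadd, T_neg T hadd x]
  noncomm_ring

private theorem DD_sym (T : A → B) (u v : A) : DD T u v = DD T v u := by
  unfold DD
  rw [show u * v + v * u = v * u + u * v from add_comm _ _]
  noncomm_ring

private theorem DD_add_right (T : A → B) (hadd : ∀ x y : A, T (x + y) = T x + T y)
    (x y₁ y₂ : A) : DD T x (y₁ + y₂) = DD T x y₁ + DD T x y₂ := by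
  rw [DD_sym, DD_add_left T hadd, DD_sym T y₁, DD_sym T y₂]

private theorem DD_zero_left (T : A → B) (hadd : ∀ x y : A, T (x + y) = T x + T y)
    (y : A) : DD T 0 y = 0 := by
  unfold DD
  rw [show (0 : A) * y + y * 0 = 0 from by noncomm_ring, T_zero T hadd]
  noncomm_ring

private theorem DD_perp (T : A → B) (hadd : ∀ x y : A, T (x + y) = T x + T y)
    (hz : ∀ x y : A, x * y = 0 → y * x = 0 → T x * T y + T y * T x = 0)
    (x y : A) (hxy : x * y = 0) (hyx : y * x = 0) : DD T x y = 0 := by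
  unfold DD
  rw [hxy, hyx, add_zero, T_zero T hadd, hz x y hxy hyx]
  noncomm_ring

private theorem hmulso (g : A) (hg : g * g = g) : g * (1 - g) = 0 := by
  rw [mul_sub, mul_one, hg, sub_self]

private theorem hmulos (g : A) (hg : g * g = g) : (1 - g) * g = 0 := by
  rw [sub_mul, one_mul, hg, sub_self]

section
variable (T : A → B) (hadd : ∀ x y : A, T (x + y) = T x + T y)
  (hz : ∀ x y : A, x * y = 0 → y * x = 0 → T x * T y + T y * T x = 0)

include hadd in
private theorem T_one_sub (g : A) : T (1 - g) = T 1 - T g := by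
  have h1 := hadd (1 - g) g
  rw [show (1 : A) - g + g = 1 from by abel] at h1
  exact eq_sub_of_add_eq h1.symm

include hadd hz in
private theorem idem_anti (g : A) (hg : g * g = g) :
    T 1 * T g + T g * T 1 = 2 * (T g * T g) := by
  have hz1 := hz g (1 - g) (hmulso g hg) (hmulos g hg)
  rw [T_one_sub T hadd] at hz1
  have cert : T 1 * T g + T g * T 1 - 2 * (T g * T g)
      = T g * (T 1 - T g) + (T 1 - T g) * T g := by noncomm_ring
  rw [hz1] at cert
  exact sub_eq_zero.mp cert

include hadd hz in
private theorem L2a (g x : A) (hg : g * g = g) :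
    T 1 * T (g * x * g) + T (g * x * g) * T 1
      = T g * T (g * x * g) + T (g * x * g) * T g := by
  have h1 : (1 - g) * (g * x * g) = 0 := by
    rw [← mul_assoc, ← mul_assoc, hmulos g hg, zero_mul, zero_mul]
  have h2 : (g * x * g) * (1 - g) = 0 := by
    rw [mul_assoc, hmulso g hg, mul_zero]
  have hz1 := hz (1 - g) (g * x * g) h1 h2
  rw [T_one_sub T hadd] at hz1
  have cert : T 1 * T (g * x * g) + T (g * x * g) * T 1
      - (T g * T (g * x * g) + T (g * x * g) * T g)
      = (T 1 - T g) * T (g * x * g) + T (g * x * g) * (T 1 - T g) := by noncomm_ring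
  rw [hz1] at cert
  exact sub_eq_zero.mp cert

include hz in
private theorem L2b (g x : A) (hg : g * g = g) :
    T g * T ((1 - g) * x * (1 - g)) + T ((1 - g) * x * (1 - g)) * T g = 0 :=
  hz g _ (by rw [← mul_assoc, ← mul_assoc, hmulso g hg, zero_mul, zero_mul])
    (by rw [mul_assoc, hmulos g hg, mul_zero])

private theorem idem_r (g x : A) (hg : g * g = g) :
    (g + g * x * (1 - g)) * (g + g * x * (1 - g)) = g + g * x * (1 - g) := by
  have hgu : g * (g * x * (1 - g)) = g * x * (1 - g) := by
    rw [← mul_assoc, ← mul_assoc, hg]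
  have hug : (g * x * (1 - g)) * g = 0 := by rw [mul_assoc, hmulos g hg, mul_zero]
  have huu : (g * x * (1 - g)) * (g * x * (1 - g)) = 0 := by
    have h1 : (1 - g) * (g * x * (1 - g)) = 0 := by
      rw [← mul_assoc, ← mul_assoc, hmulos g hg, zero_mul, zero_mul]
    rw [mul_assoc, h1, mul_zero]
  rw [add_mul, mul_add, mul_add, hg, hgu, hug, huu]; abel

private theorem idem_l (g x : A) (hg : g * g = g) :
    (g + (1 - g) * x * g) * (g + (1 - g) * x * g) = g + (1 - g) * x * g := by
  have hgv : g * ((1 - g) * x * g) = 0 := by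
    rw [← mul_assoc, ← mul_assoc, hmulso g hg, zero_mul, zero_mul]
  have hvg : ((1 - g) * x * g) * g = (1 - g) * x * g := by rw [mul_assoc, hg]
  have hvv : ((1 - g) * x * g) * ((1 - g) * x * g) = 0 := by
    have h1 : ((1 - g) * x * g) * (1 - g) = 0 := by rw [mul_assoc, hmulso g hg, mul_zero]
    rw [← mul_assoc, ← mul_assoc, h1, zero_mul, zero_mul]
  rw [add_mul, mul_add, mul_add, hg, hgv, hvg, hvv]; abel

include hadd hz in
private theorem L2c (g x : A) (hg : g * g = g) :
    T 1 * T (g * x * (1 - g)) + T (g * x * (1 - g)) * T 1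
      = 2 * (T g * T (g * x * (1 - g)) + T (g * x * (1 - g)) * T g) := by
  have huu : (g * x * (1 - g)) * (g * x * (1 - g)) = 0 := by
    have h1 : (1 - g) * (g * x * (1 - g)) = 0 := by
      rw [← mul_assoc, ← mul_assoc, hmulos g hg, zero_mul, zero_mul]
    rw [mul_assoc, h1, mul_zero]
  have e1 := idem_anti T hadd hz (g + g * x * (1 - g)) (idem_r g x hg)
  have e2 := idem_anti T hadd hz g hg
  have e3 := hz (g * x * (1 - g)) (g * x * (1 - g)) huu huu
  rw [hadd g (g * x * (1 - g))] at e1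
  have cert : T 1 * T (g * x * (1 - g)) + T (g * x * (1 - g)) * T 1
      - 2 * (T g * T (g * x * (1 - g)) + T (g * x * (1 - g)) * T g)
      = (T 1 * (T g + T (g * x * (1 - g))) + (T g + T (g * x * (1 - g))) * T 1
          - 2 * ((T g + T (g * x * (1 - g))) * (T g + T (g * x * (1 - g)))))
        - (T 1 * T g + T g * T 1 - 2 * (T g * T g))
        + (T (g * x * (1 - g)) * T (g * x * (1 - g))
            + T (g * x * (1 - g)) * T (g * x * (1 - g))) := by noncomm_ring
  rw [sub_eq_zero_of_eq e1, sub_eq_zero_of_eq e2, e3] at cert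
  simp only [sub_zero, zero_sub, add_zero, neg_zero, zero_add, sub_self] at cert
  exact sub_eq_zero.mp cert

include hadd hz in
private theorem L2d (g x : A) (hg : g * g = g) :
    T 1 * T ((1 - g) * x * g) + T ((1 - g) * x * g) * T 1
      = 2 * (T g * T ((1 - g) * x * g) + T ((1 - g) * x * g) * T g) := by
  have hvv : ((1 - g) * x * g) * ((1 - g) * x * g) = 0 := by
    have h1 : ((1 - g) * x * g) * (1 - g) = 0 := by rw [mul_assoc, hmulso g hg, mul_zero]
    rw [← mul_assoc, ← mul_assoc, h1, zero_mul, zero_mul]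
  have e1 := idem_anti T hadd hz (g + (1 - g) * x * g) (idem_l g x hg)
  have e2 := idem_anti T hadd hz g hg
  have e3 := hz ((1 - g) * x * g) ((1 - g) * x * g) hvv hvv
  rw [hadd g ((1 - g) * x * g)] at e1
  have cert : T 1 * T ((1 - g) * x * g) + T ((1 - g) * x * g) * T 1
      - 2 * (T g * T ((1 - g) * x * g) + T ((1 - g) * x * g) * T g)
      = (T 1 * (T g + T ((1 - g) * x * g)) + (T g + T ((1 - g) * x * g)) * T 1
          - 2 * ((T g + T ((1 - g) * x * g)) * (T g + T ((1 - g) * x * g))))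
        - (T 1 * T g + T g * T 1 - 2 * (T g * T g))
        + (T ((1 - g) * x * g) * T ((1 - g) * x * g)
            + T ((1 - g) * x * g) * T ((1 - g) * x * g)) := by noncomm_ring
  rw [sub_eq_zero_of_eq e1, sub_eq_zero_of_eq e2, e3] at cert
  simp only [sub_zero, zero_sub, add_zero, neg_zero, zero_add, sub_self] at cert
  exact sub_eq_zero.mp cert

include hadd hz in
private theorem star (g x : A) (hg : g * g = g) :
    T 1 * T (g * x + x * g) + T (g * x + x * g) * T 1
      = 2 * (T g * T x + T x * T g) := by
  have hTx : T x = T (g * x * g) + T (g * x * (1 - g)) + T ((1 - g) * x * g)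
      + T ((1 - g) * x * (1 - g)) := by
    conv_lhs => rw [show x = g * x * g + g * x * (1 - g) + (1 - g) * x * g
      + (1 - g) * x * (1 - g) from by noncomm_ring]
    rw [hadd, hadd, hadd]
  have hTj : T (g * x + x * g) = T (g * x * g) + T (g * x * g) + T (g * x * (1 - g))
      + T ((1 - g) * x * g) := by
    conv_lhs => rw [show g * x + x * g = g * x * g + g * x * g + g * x * (1 - g)
      + (1 - g) * x * g from by noncomm_ring]
    rw [hadd, hadd, hadd]
  have h11 := L2a T hadd hz g x hg
  have h00 := L2b T hz g x hg
  have h10 := L2c T hadd hz g x hg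
  have h01 := L2d T hadd hz g x hg
  rw [hTj, hTx]
  have cert : T 1 * (T (g * x * g) + T (g * x * g) + T (g * x * (1 - g)) + T ((1 - g) * x * g))
      + (T (g * x * g) + T (g * x * g) + T (g * x * (1 - g)) + T ((1 - g) * x * g)) * T 1
      - 2 * (T g * (T (g * x * g) + T (g * x * (1 - g)) + T ((1 - g) * x * g)
            + T ((1 - g) * x * (1 - g)))
          + (T (g * x * g) + T (g * x * (1 - g)) + T ((1 - g) * x * g)
            + T ((1 - g) * x * (1 - g))) * T g)
      = (T 1 * T (g * x * g) + T (g * x * g) * T 1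
          - (T g * T (g * x * g) + T (g * x * g) * T g))
        + (T 1 * T (g * x * g) + T (g * x * g) * T 1
          - (T g * T (g * x * g) + T (g * x * g) * T g))
        + (T 1 * T (g * x * (1 - g)) + T (g * x * (1 - g)) * T 1
          - 2 * (T g * T (g * x * (1 - g)) + T (g * x * (1 - g)) * T g))
        + (T 1 * T ((1 - g) * x * g) + T ((1 - g) * x * g) * T 1
          - 2 * (T g * T ((1 - g) * x * g) + T ((1 - g) * x * g) * T g))
        - 2 * (T g * T ((1 - g) * x * (1 - g)) + T ((1 - g) * x * (1 - g)) * T g) := by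
    noncomm_ring
  rw [sub_eq_zero_of_eq h11, sub_eq_zero_of_eq h10, sub_eq_zero_of_eq h01, h00] at cert
  simp only [sub_zero, zero_sub, add_zero, neg_zero, zero_add, sub_self, mul_zero] at cert
  exact sub_eq_zero.mp cert

include hadd hz in
private theorem DDstar (g x : A) (hg : g * g = g) : DD T g x = 0 := by
  unfold DD
  exact sub_eq_zero_of_eq (star T hadd hz g x hg)

include hadd hz in
private theorem DDoffr (g x y : A) (hg : g * g = g) : DD T (g * x * (1 - g)) y = 0 := by
  have h1 := DDstar T hadd hz (g + g * x * (1 - g)) y (idem_r g x hg)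
  rw [DD_add_left T hadd, DDstar T hadd hz g y hg, zero_add] at h1
  exact h1

include hadd hz in
private theorem DDoffl (g x y : A) (hg : g * g = g) : DD T ((1 - g) * x * g) y = 0 := by
  have h1 := DDstar T hadd hz (g + (1 - g) * x * g) y (idem_l g x hg)
  rw [DD_add_left T hadd, DDstar T hadd hz g y hg, zero_add] at h1
  exact h1

include hadd hz in
private theorem gen (e f y : A) (he : e * e = e) (hf : f * f = f) :
    DD T (e * f + f * e) y = 0 := by
  have dm : ∀ z : A, DD T ((1 - f) * e * f) z = 0 := fun z => DDoffl T hadd hz f e z hf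
  have dm' : ∀ z : A, DD T (f * e * (1 - f)) z = 0 := fun z => DDoffr T hadd hz f e z hf
  have dab : ∀ z : A, DD T (f * e * f) z = -DD T ((1 - f) * e * (1 - f)) z := by
    intro z
    have he0 : DD T (f * e * f + (1 - f) * e * f + f * e * (1 - f)
        + (1 - f) * e * (1 - f)) z = 0 := by
      rw [show f * e * f + (1 - f) * e * f + f * e * (1 - f) + (1 - f) * e * (1 - f) = e
        from by noncomm_ring]
      exact DDstar T hadd hz e z he
    rw [DD_add_left T hadd, DD_add_left T hadd, DD_add_left T hadd, dm z, dm' z,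
      add_zero, add_zero] at he0
    exact eq_neg_of_add_eq_zero_left he0
  have hperp1 : DD T (f * e * f) ((1 - f) * y * (1 - f)) = 0 := by
    apply DD_perp T hadd hz
    · rw [mul_assoc, ← mul_assoc f ((1 - f) * y) (1 - f), ← mul_assoc f (1 - f) y,
        hmulso f hf, zero_mul, zero_mul, mul_zero]
    · rw [mul_assoc, ← mul_assoc (1 - f) (f * e) f, ← mul_assoc (1 - f) f e,
        hmulos f hf, zero_mul, zero_mul, mul_zero]
  have hperp2 : DD T ((1 - f) * e * (1 - f)) (f * y * f) = 0 := by
    apply DD_perp T hadd hz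
    · rw [mul_assoc, ← mul_assoc (1 - f) (f * y) f, ← mul_assoc (1 - f) f y,
        hmulos f hf, zero_mul, zero_mul, mul_zero]
    · rw [mul_assoc, ← mul_assoc f ((1 - f) * e) (1 - f), ← mul_assoc f (1 - f) e,
        hmulso f hf, zero_mul, zero_mul, mul_zero]
  have hay : DD T (f * e * f) y = DD T (f * e * f) (f * y * f) := by
    conv_lhs => rw [show y = f * y * f + f * y * (1 - f) + (1 - f) * y * f
      + (1 - f) * y * (1 - f) from by noncomm_ring]
    rw [DD_add_right T hadd, DD_add_right T hadd, DD_add_right T hadd]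
    rw [DD_sym T (f * e * f) (f * y * (1 - f)), DDoffr T hadd hz f y (f * e * f) hf]
    rw [DD_sym T (f * e * f) ((1 - f) * y * f), DDoffl T hadd hz f y (f * e * f) hf]
    rw [hperp1, add_zero, add_zero, add_zero]
  have hfin : DD T (f * e * f) y = 0 := by
    rw [hay, dab (f * y * f), hperp2, neg_zero]
  rw [show e * f + f * e = f * e * f + f * e * f + (1 - f) * e * f + f * e * (1 - f)
    from by noncomm_ring]
  rw [DD_add_left T hadd, DD_add_left T hadd, DD_add_left T hadd, hfin, dm y, dm' y]
  simp

include hadd hz in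
private theorem KEYlem
    (hspan : AddSubgroup.closure {a : A | ∃ e f : A,
      IsIdempotentElem e ∧ IsIdempotentElem f ∧ a = e * f + f * e} = ⊤)
    (x y : A) : DD T x y = 0 := by
  have hx : x ∈ AddSubgroup.closure {a : A | ∃ e f : A,
      IsIdempotentElem e ∧ IsIdempotentElem f ∧ a = e * f + f * e} :=
    hspan ▸ AddSubgroup.mem_top x
  refine AddSubgroup.closure_induction (p := fun a _ => ∀ y : A, DD T a y = 0)
    ?_ ?_ ?_ ?_ hx y
  · rintro a ⟨e, f, he, hf, rfl⟩ y
    exact gen T hadd hz e f y he hf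
  · intro y; exact DD_zero_left T hadd y
  · rintro a b _ _ ha hb y
    rw [DD_add_left T hadd, ha y, hb y, add_zero]
  · rintro a _ ha y
    rw [DD_neg_left T hadd, ha y, neg_zero]

end
end Stmt4Aux

/-- If `A` is additively spanned by Jordan products of its idempotents,
`2` is invertible in `B`, and `T : A → B` is a surjective additive map such that
`T x ∘ T y = 0` whenever `xy = yx = 0`, then `T` is a weighted Jordan homomorphism. -/
theorem stmt4 {A B : Type*} [Ring A] [Ring B]
    (hspan : AddSubgroup.closure {a : A | ∃ e f : A,
      IsIdempotentElem e ∧ IsIdempotentElem f ∧ a = e * f + f * e} = ⊤)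
    (h2 : IsUnit (2 : B))
    (T : A → B) (hadd : ∀ x y : A, T (x + y) = T x + T y)
    (hsurj : Function.Surjective T)
    (hz : ∀ x y : A, x * y = 0 → y * x = 0 → T x * T y + T y * T x = 0) :
    T 1 ∈ Set.center B ∧ IsUnit (T 1) ∧
      ∀ x y : A, T 1 * T (x * y + y * x) = T x * T y + T y * T x := by
  obtain ⟨w, hw⟩ := hsurj 1
  have KEY : ∀ x y : A, T 1 * T (x * y + y * x) + T (x * y + y * x) * T 1
      = 2 * (T x * T y + T y * T x) := by
    intro x y
    have h := Stmt4Aux.KEYlem T hadd hz hspan x y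
    unfold Stmt4Aux.DD at h
    exact sub_eq_zero.mp h
  have two_cancel : ∀ u v : B, (2 : B) * u = 2 * v → u = v := by
    obtain ⟨u2, hu2⟩ := h2
    intro u v h
    have hinv : ((u2⁻¹ : Bˣ) : B) * (2 : B) = 1 := by
      rw [← hu2]; exact u2.inv_mul
    have h2u : ((u2⁻¹ : Bˣ) : B) * ((2 : B) * u)
        = ((u2⁻¹ : Bˣ) : B) * ((2 : B) * v) := by rw [h]
    rwa [← mul_assoc, ← mul_assoc, hinv, one_mul, one_mul] at h2u
  -- Step 1 : invertibility of c = T 1, with inverse d = T (w*w)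
  have R1 : T 1 * T (w * w) + T (w * w) * T 1 = 2 := by
    apply two_cancel
    have k := KEY w w
    rw [hw, hadd (w * w) (w * w)] at k
    calc (2 : B) * (T 1 * T (w * w) + T (w * w) * T 1)
        = T 1 * (T (w * w) + T (w * w)) + (T (w * w) + T (w * w)) * T 1 := by noncomm_ring
      _ = 2 * ((1 : B) * 1 + 1 * 1) := k
      _ = 2 * 2 := by norm_num
  have R2 : T 1 * T (w * (w * w)) + T (w * (w * w)) * T 1 = 2 * T (w * w) := by
    apply two_cancel
    have k := KEY w (w * w)
    rw [hw, show w * (w * w) + (w * w) * w = w * (w * w) + w * (w * w) from by noncomm_ring,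
      hadd (w * (w * w)) (w * (w * w))] at k
    calc (2 : B) * (T 1 * T (w * (w * w)) + T (w * (w * w)) * T 1)
        = T 1 * (T (w * (w * w)) + T (w * (w * w)))
          + (T (w * (w * w)) + T (w * (w * w))) * T 1 := by noncomm_ring
      _ = 2 * ((1 : B) * T (w * w) + T (w * w) * 1) := k
      _ = 2 * (2 * T (w * w)) := by noncomm_ring
  have R3 : T 1 * T ((w * w) * (w * w)) + T ((w * w) * (w * w)) * T 1
      = 2 * (T (w * w) * T (w * w)) := by
    apply two_cancel
    have k := KEY (w * w) (w * w)
    rw [hadd ((w * w) * (w * w)) ((w * w) * (w * w))] at k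
    calc (2 : B) * (T 1 * T ((w * w) * (w * w)) + T ((w * w) * (w * w)) * T 1)
        = T 1 * (T ((w * w) * (w * w)) + T ((w * w) * (w * w)))
          + (T ((w * w) * (w * w)) + T ((w * w) * (w * w))) * T 1 := by noncomm_ring
      _ = 2 * (T (w * w) * T (w * w) + T (w * w) * T (w * w)) := k
      _ = 2 * (2 * (T (w * w) * T (w * w))) := by noncomm_ring
  have R4 : T 1 * T ((w * w) * (w * w)) + T ((w * w) * (w * w)) * T 1
      = 2 * T (w * (w * w)) := by
    apply two_cancel
    have k := KEY w (w * (w * w))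
    rw [hw, show w * (w * (w * w)) + (w * (w * w)) * w
        = (w * w) * (w * w) + (w * w) * (w * w) from by noncomm_ring,
      hadd ((w * w) * (w * w)) ((w * w) * (w * w))] at k
    calc (2 : B) * (T 1 * T ((w * w) * (w * w)) + T ((w * w) * (w * w)) * T 1)
        = T 1 * (T ((w * w) * (w * w)) + T ((w * w) * (w * w)))
          + (T ((w * w) * (w * w)) + T ((w * w) * (w * w))) * T 1 := by noncomm_ring
      _ = 2 * ((1 : B) * T (w * (w * w)) + T (w * (w * w)) * 1) := k
      _ = 2 * (2 * T (w * (w * w))) := by noncomm_ring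
  have hd3 : T (w * (w * w)) = T (w * w) * T (w * w) := two_cancel _ _ (by rw [← R4, R3])
  have F3 : T 1 * (T (w * w) * T (w * w)) + (T (w * w) * T (w * w)) * T 1 = 2 * T (w * w) := by
    rw [← hd3]; exact R2
  have hi : T (w * w) * T 1 * T (w * w) + T (w * w) * T (w * w) * T 1 = 2 * T (w * w) := by
    calc T (w * w) * T 1 * T (w * w) + T (w * w) * T (w * w) * T 1
        = T (w * w) * (T 1 * T (w * w) + T (w * w) * T 1) := by noncomm_ring
      _ = T (w * w) * 2 := by rw [R1]
      _ = 2 * T (w * w) := by noncomm_ring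
  have hii : T 1 * (T (w * w) * T (w * w)) + T (w * w) * T 1 * T (w * w) = 2 * T (w * w) := by
    calc T 1 * (T (w * w) * T (w * w)) + T (w * w) * T 1 * T (w * w)
        = (T 1 * T (w * w) + T (w * w) * T 1) * T (w * w) := by noncomm_ring
      _ = 2 * T (w * w) := by rw [R1]
  have hiv : T (w * w) * T 1 * T (w * w) = T 1 * (T (w * w) * T (w * w)) := by
    have h0 : T (w * w) * T 1 * T (w * w) - T 1 * (T (w * w) * T (w * w))
        = (T (w * w) * T 1 * T (w * w) + T (w * w) * T (w * w) * T 1)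
          - (T 1 * (T (w * w) * T (w * w)) + (T (w * w) * T (w * w)) * T 1) := by noncomm_ring
    rw [hi, F3, sub_self] at h0
    exact sub_eq_zero.mp h0
  have hv : T (w * w) * T 1 * T (w * w) = T (w * w) * T (w * w) * T 1 := by
    have h0 : T (w * w) * T 1 * T (w * w) - T (w * w) * T (w * w) * T 1
        = (T 1 * (T (w * w) * T (w * w)) + T (w * w) * T 1 * T (w * w))
          - (T 1 * (T (w * w) * T (w * w)) + (T (w * w) * T (w * w)) * T 1) := by noncomm_ring
    rw [hii, F3, sub_self] at h0
    exact sub_eq_zero.mp h0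
  have hvi : T 1 * (T (w * w) * T (w * w)) = T (w * w) := by
    apply two_cancel
    calc (2 : B) * (T 1 * (T (w * w) * T (w * w)))
        = T 1 * (T (w * w) * T (w * w)) + T 1 * (T (w * w) * T (w * w)) := by noncomm_ring
      _ = T 1 * (T (w * w) * T (w * w)) + T (w * w) * T 1 * T (w * w) := by rw [hiv]
      _ = 2 * T (w * w) := hii
  have hvii : T (w * w) * T (w * w) * T 1 = T (w * w) := by
    apply two_cancel
    calc (2 : B) * (T (w * w) * T (w * w) * T 1)
        = T (w * w) * T (w * w) * T 1 + T (w * w) * T (w * w) * T 1 := by noncomm_ring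
      _ = T (w * w) * T 1 * T (w * w) + T (w * w) * T (w * w) * T 1 := by rw [hv]
      _ = 2 * T (w * w) := hi
  have hcomm : T 1 * T (w * w) = T (w * w) * T 1 := by
    calc T 1 * T (w * w) = T 1 * (T (w * w) * T (w * w) * T 1) := by rw [hvii]
      _ = (T 1 * (T (w * w) * T (w * w))) * T 1 := by noncomm_ring
      _ = T (w * w) * T 1 := by rw [hvi]
  have hcd : T 1 * T (w * w) = 1 := by
    apply two_cancel
    calc (2 : B) * (T 1 * T (w * w)) = T 1 * T (w * w) + T 1 * T (w * w) := by noncomm_ring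
      _ = T 1 * T (w * w) + T (w * w) * T 1 := by rw [hcomm]
      _ = 2 := R1
      _ = 2 * 1 := by rw [mul_one]
  have hdc : T (w * w) * T 1 = 1 := by rw [← hcomm]; exact hcd
  -- Step 2 : c * c commutes with every T g, g idempotent
  have c2idem : ∀ g : A, g * g = g → (T 1 * T 1) * T g - T g * (T 1 * T 1) = 0 := by
    intro g hg
    have hE : T 1 * T g + T g * T 1 - 2 * (T g * T g) = 0 :=
      sub_eq_zero_of_eq (Stmt4Aux.idem_anti T hadd hz g hg)
    have cert : (T 1 * T 1) * T g - T g * (T 1 * T 1)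
        = T 1 * (T 1 * T g + T g * T 1 - 2 * (T g * T g))
          - (T 1 * T g + T g * T 1 - 2 * (T g * T g)) * T 1
          - 2 * (T g * (T 1 * T g + T g * T 1 - 2 * (T g * T g)))
          + 2 * ((T 1 * T g + T g * T 1 - 2 * (T g * T g)) * T g) := by noncomm_ring
    rw [hE] at cert
    simpa using cert
  -- Step 3 : [c*c, T a] anticommutes with c for all a
  have anti_all : ∀ a : A,
      T 1 * ((T 1 * T 1) * T a - T a * (T 1 * T 1))
        + ((T 1 * T 1) * T a - T a * (T 1 * T 1)) * T 1 = 0 := by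
    intro a
    have ha : a ∈ AddSubgroup.closure {a : A | ∃ e f : A,
        IsIdempotentElem e ∧ IsIdempotentElem f ∧ a = e * f + f * e} :=
      hspan ▸ AddSubgroup.mem_top a
    refine AddSubgroup.closure_induction ?_ ?_ ?_ ?_ ha
    · rintro a ⟨e, f, he, hf, rfl⟩
      have hK := KEY e f
      have hce := c2idem e he
      have hcf := c2idem f hf
      have step1 : T 1 * ((T 1 * T 1) * T (e * f + f * e) - T (e * f + f * e) * (T 1 * T 1))
          + ((T 1 * T 1) * T (e * f + f * e) - T (e * f + f * e) * (T 1 * T 1)) * T 1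
          = (T 1 * T 1) * (T 1 * T (e * f + f * e) + T (e * f + f * e) * T 1)
            - (T 1 * T (e * f + f * e) + T (e * f + f * e) * T 1) * (T 1 * T 1) := by
        noncomm_ring
      rw [step1, hK]
      have step2 : (T 1 * T 1) * (2 * (T e * T f + T f * T e))
          - (2 * (T e * T f + T f * T e)) * (T 1 * T 1)
          = 2 * (((T 1 * T 1) * T e - T e * (T 1 * T 1)) * T f)
            + 2 * (T e * ((T 1 * T 1) * T f - T f * (T 1 * T 1)))
            + 2 * (((T 1 * T 1) * T f - T f * (T 1 * T 1)) * T e)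
            + 2 * (T f * ((T 1 * T 1) * T e - T e * (T 1 * T 1))) := by noncomm_ring
      rw [step2, hce, hcf]
      simp
    · rw [Stmt4Aux.T_zero T hadd]; simp
    · intro a b _ _ ha hb
      rw [hadd a b]
      have cert : T 1 * ((T 1 * T 1) * (T a + T b) - (T a + T b) * (T 1 * T 1))
          + ((T 1 * T 1) * (T a + T b) - (T a + T b) * (T 1 * T 1)) * T 1
          = (T 1 * ((T 1 * T 1) * T a - T a * (T 1 * T 1))
              + ((T 1 * T 1) * T a - T a * (T 1 * T 1)) * T 1)
            + (T 1 * ((T 1 * T 1) * T b - T b * (T 1 * T 1))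
              + ((T 1 * T 1) * T b - T b * (T 1 * T 1)) * T 1) := by noncomm_ring
      rw [cert, ha, hb, add_zero]
    · intro a _ ha
      rw [Stmt4Aux.T_neg T hadd a]
      have cert : T 1 * ((T 1 * T 1) * (-T a) - (-T a) * (T 1 * T 1))
          + ((T 1 * T 1) * (-T a) - (-T a) * (T 1 * T 1)) * T 1
          = -(T 1 * ((T 1 * T 1) * T a - T a * (T 1 * T 1))
              + ((T 1 * T 1) * T a - T a * (T 1 * T 1)) * T 1) := by noncomm_ring
      rw [cert, ha, neg_zero]
  have anti_allB : ∀ β : B,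
      T 1 * ((T 1 * T 1) * β - β * (T 1 * T 1))
        + ((T 1 * T 1) * β - β * (T 1 * T 1)) * T 1 = 0 := by
    intro β
    obtain ⟨x, hx⟩ := hsurj β
    rw [← hx]
    exact anti_all x
  -- Step 4 : c * c is central
  have c2cent : ∀ β : B, (T 1 * T 1) * β = β * (T 1 * T 1) := by
    intro β
    obtain ⟨x, hx⟩ := hsurj β
    have hk := KEY x w
    rw [hx, hw] at hk
    have hδ := anti_allB (T (x * w + w * x))
    have step : (T 1 * T 1) * (T 1 * T (x * w + w * x) + T (x * w + w * x) * T 1)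
        - (T 1 * T (x * w + w * x) + T (x * w + w * x) * T 1) * (T 1 * T 1)
        = T 1 * ((T 1 * T 1) * T (x * w + w * x) - T (x * w + w * x) * (T 1 * T 1))
          + ((T 1 * T 1) * T (x * w + w * x) - T (x * w + w * x) * (T 1 * T 1)) * T 1 := by
      noncomm_ring
    rw [hδ, hk] at step
    have fin : (2 : B) * ((2 : B) * ((T 1 * T 1) * β - β * (T 1 * T 1)))
        = (T 1 * T 1) * (2 * (β * 1 + 1 * β)) - (2 * (β * 1 + 1 * β)) * (T 1 * T 1) := by
      noncomm_ring
    rw [step] at fin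
    have f1 : (2 : B) * ((2 : B) * ((T 1 * T 1) * β - β * (T 1 * T 1))) = 2 * 0 := by
      rw [fin, mul_zero]
    have f2 : (2 : B) * ((T 1 * T 1) * β - β * (T 1 * T 1)) = 2 * 0 := by
      rw [two_cancel _ _ f1, mul_zero]
    exact sub_eq_zero.mp (two_cancel _ _ f2)
  -- Step 5 : c is central
  have ccent : ∀ β : B, T 1 * β = β * T 1 := by
    intro β
    obtain ⟨x, hx⟩ := hsurj β
    have hk := KEY x w
    rw [hx, hw] at hk
    have step : T 1 * (T 1 * T (x * w + w * x) + T (x * w + w * x) * T 1)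
        - (T 1 * T (x * w + w * x) + T (x * w + w * x) * T 1) * T 1
        = (T 1 * T 1) * T (x * w + w * x) - T (x * w + w * x) * (T 1 * T 1) := by noncomm_ring
    rw [c2cent (T (x * w + w * x)), sub_self] at step
    rw [hk] at step
    have fin : (2 : B) * ((2 : B) * (T 1 * β - β * T 1))
        = T 1 * (2 * (β * 1 + 1 * β)) - (2 * (β * 1 + 1 * β)) * T 1 := by noncomm_ring
    rw [step] at fin
    have f1 : (2 : B) * ((2 : B) * (T 1 * β - β * T 1)) = 2 * 0 := by rw [fin, mul_zero]
    have f2 : (2 : B) * (T 1 * β - β * T 1) = 2 * 0 := by rw [two_cancel _ _ f1, mul_zero]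
    exact sub_eq_zero.mp (two_cancel _ _ f2)
  refine ⟨Semigroup.mem_center_iff.mpr (fun b => (ccent b).symm),
    ⟨⟨T 1, T (w * w), hcd, hdc⟩, rfl⟩, ?_⟩
  intro x y
  have hk := KEY x y
  apply two_cancel
  calc (2 : B) * (T 1 * T (x * y + y * x))
      = T 1 * T (x * y + y * x) + T 1 * T (x * y + y * x) := by noncomm_ring
    _ = T 1 * T (x * y + y * x) + T (x * y + y * x) * T 1 := by
        rw [ccent (T (x * y + y * x))]
    _ = 2 * (T x * T y + T y * T x) := hk
end

section
/- Let R be a unital ring in which 2 is invertible and let A = Mₙ(R) with n ≥ 2. Then A is additively spanned by Jordan products of its idempotents, i.e., A equals the additive subgroup generated by elements e∘f where e, f are idempotent matrices. -/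
/-!
Write `E i j c` for the matrix with the single entry `c` at `(i, j)` and `x ∘ y = x * y + y * x`.
For `i ≠ j` both `E i i 1 + E i j c` and `E i i 1` are idempotent, and the difference of their
Jordan products with `E i i 1` is `E i j c`. For the diagonal, the rank-one idempotent
`(E i i a + E j i (1 - a)) * (E i i 1 + E i j 1)` has Jordan product `E i i (a + a)` with
`E i i 1`, up to off-diagonal terms. Since `2` is invertible, every `c` is of the form `a + a`.
-/

open Matrix

def idempotentJordanSpan (A : Type*) [Ring A] : AddSubgroup A :=
  AddSubgroup.closure {a | ∃ e f : A, IsIdempotentElem e ∧ IsIdempotentElem f ∧ a = e * f + f * e}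

section Ring

variable {A : Type*} [Ring A]

theorem isIdempotentElem_mul_of_mul_mul_self {u w : A} (h : w * u * w = w) :
    IsIdempotentElem (u * w) := by
  rw [IsIdempotentElem, mul_assoc, ← mul_assoc w, h]

theorem jordan_mem_idempotentJordanSpan {e f : A} (he : IsIdempotentElem e)
    (hf : IsIdempotentElem f) : e * f + f * e ∈ idempotentJordanSpan A :=
  AddSubgroup.subset_closure ⟨e, f, he, hf, rfl⟩

theorem sub_jordan_mem_idempotentJordanSpan {e e' f : A} (he : IsIdempotentElem e)
    (he' : IsIdempotentElem e') (hf : IsIdempotentElem f) :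
    (e - e') * f + f * (e - e') ∈ idempotentJordanSpan A := by
  have h := sub_mem (jordan_mem_idempotentJordanSpan he hf)
    (jordan_mem_idempotentJordanSpan he' hf)
  rwa [sub_mul, mul_sub, sub_add_sub_comm]

theorem exists_add_self_eq (h2 : IsUnit (2 : A)) (c : A) : ∃ a, a + a = c :=
  ⟨↑h2.unit⁻¹ * c, by rw [← two_mul, ← mul_assoc, h2.mul_val_inv, one_mul]⟩

end Ring

namespace Matrix

variable {n R : Type*} [Fintype n] [DecidableEq n] [Ring R]

theorem isIdempotentElem_single_one (i : n) : IsIdempotentElem (single i i (1 : R)) := by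
  simp [IsIdempotentElem]

theorem isIdempotentElem_single_one_add_single {i j : n} (hij : i ≠ j) (c : R) :
    IsIdempotentElem (single i i 1 + single i j c) := by
  simp [IsIdempotentElem, mul_add, add_mul, single_mul_single_of_ne _ _ _ _ hij.symm]

theorem single_mem_idempotentJordanSpan {i j : n} (hij : i ≠ j) (c : R) :
    single i j c ∈ idempotentJordanSpan (Matrix n n R) := by
  have h := sub_jordan_mem_idempotentJordanSpan (isIdempotentElem_single_one_add_single hij c)
    (isIdempotentElem_single_one i) (isIdempotentElem_single_one i)
  simpa [single_mul_single_of_ne _ _ _ _ hij.symm] using h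

theorem single_add_self_mem_idempotentJordanSpan {i j : n} (hij : i ≠ j) (a : R) :
    single i i (a + a) ∈ idempotentJordanSpan (Matrix n n R) := by
  set u := single i i a + single j i (1 - a)
  set w := single i i (1 : R) + single i j 1
  have hw : w * u * w = w := by
    simp only [u, w, mul_add, add_mul, single_mul_single_same, single_mul_single_of_ne _ _ _ _ hij,
      single_mul_single_of_ne _ _ _ _ hij.symm, add_zero, zero_add, mul_one, one_mul]
    rw [← single_add, ← single_add, add_sub_cancel]
  have hjordan : u * w * single i i 1 + single i i 1 * (u * w)
      = single i i (a + a) + single i j a + single j i (1 - a) := by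
    simp only [u, w, mul_add, add_mul, single_mul_single_same, single_mul_single_of_ne _ _ _ _ hij,
      single_mul_single_of_ne _ _ _ _ hij.symm, mul_one, one_mul, single_add]
    abel
  have h := jordan_mem_idempotentJordanSpan (isIdempotentElem_mul_of_mul_mul_self hw)
    (isIdempotentElem_single_one i)
  rw [hjordan] at h
  have h' := sub_mem (sub_mem h (single_mem_idempotentJordanSpan hij.symm (1 - a)))
    (single_mem_idempotentJordanSpan hij a)
  rwa [add_sub_cancel_right, add_sub_cancel_right] at h'

theorem idempotentJordanSpan_eq_top [Nontrivial n] (h2 : IsUnit (2 : R)) :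
    idempotentJordanSpan (Matrix n n R) = ⊤ := by
  refine eq_top_iff.2 fun M _ => M.induction_on' (zero_mem _) (fun _ _ => add_mem) fun i j c => ?_
  rcases eq_or_ne i j with rfl | hij
  · obtain ⟨k, hk⟩ := exists_ne i
    obtain ⟨a, rfl⟩ := exists_add_self_eq h2 c
    exact single_add_self_mem_idempotentJordanSpan hk.symm a
  · exact single_mem_idempotentJordanSpan hij c

end Matrix

/-- For a unital ring `R` with `2` invertible and `n ≥ 2`, the matrix
ring `Mₙ(R)` is additively spanned by Jordan products of its idempotents. -/
theorem stmt5 {R : Type*} [Ring R] (h2 : IsUnit (2 : R)) (n : ℕ) (hn : 2 ≤ n) :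
    AddSubgroup.closure {a : Matrix (Fin n) (Fin n) R | ∃ e f : Matrix (Fin n) (Fin n) R,
      IsIdempotentElem e ∧ IsIdempotentElem f ∧ a = e * f + f * e} = ⊤ := by
  have : Nontrivial (Fin n) := Fin.nontrivial_iff_two_le.2 hn
  exact idempotentJordanSpan_eq_top h2
end

section
/- Let R be a unital ring with 2 invertible and A = Mₙ(R), n ≥ 2. If T: A → A is a surjective additive map such that T(x)∘T(y) = 0 whenever xy = yx = 0, then T is a weighted Jordan homomorphism. -/
/-!
Write `c = T 1` and `φ(x, y) = T x ∘ T y`, a symmetric biadditive form vanishing on pairs with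
`xy = yx = 0`. Evaluating `φ` on orthogonal pairs built from matrix units gives
`2 φ(x, y) = φ(x ∘ y, 1) = T(x ∘ y) ∘ c` for all `x, y`.

For an idempotent `e` this reads `c ∘ T e = 2 (T e)²`, which forces `c²` to commute with `T e`.
The additive span of the idempotents contains every off-diagonal matrix unit and every
difference of two diagonal ones; applying the derivation `[c², -]` to the identity above then
yields `[c², T z] ∘ c = 0`, and with `T u = 1` also `[c², T z] = 0`. So `c²` is central, and since
every element is `¼ (w c + c w)` for some `w` while `[c, w c + c w] = [c², w]`, so is `c`. The
identity becomes `c T(x ∘ y) = T x ∘ T y`, and `x = y = u` gives `c T(u²) = 1`.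
-/

open Matrix

section Ring
variable {A : Type*} [Ring A]

theorem two_nsmul_inj_of_isUnit (h2 : IsUnit (2 : A)) {x y : A} : 2 • x = 2 • y ↔ x = y := by
  rw [two_nsmul, two_nsmul, ← two_mul, ← two_mul, h2.mul_right_inj]

theorem commute_mul_self_of_add_mul_eq_two_nsmul {a c : A} (h : a * c + c * a = 2 • (a * a)) :
    Commute (c * c) a := by
  have hsq : a * a * c = c * (a * a) := by
    rw [← sub_eq_zero]
    calc a * a * c - c * (a * a) = a * (a * c + c * a) - (a * c + c * a) * a := by noncomm_ring
      _ = 0 := by rw [h, mul_smul_comm, smul_mul_assoc, mul_assoc, sub_self]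
  rw [Commute, SemiconjBy, ← sub_eq_zero]
  calc c * c * a - a * (c * c) = c * (a * c + c * a) - (a * c + c * a) * c := by noncomm_ring
    _ = 0 := by rw [h, mul_smul_comm, smul_mul_assoc, hsq, sub_self]

theorem commute_add_mul_of_commute_mul_self {c w : A} (h : Commute (c * c) w) :
    Commute c (w * c + c * w) := by
  rw [Commute, SemiconjBy, ← sub_eq_zero]
  calc c * (w * c + c * w) - (w * c + c * w) * c = c * c * w - w * (c * c) := by noncomm_ring
    _ = 0 := sub_eq_zero.mpr h.eq

def jordanForm (f : A →+ A) : A →+ A →+ A :=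
  (AddMonoidHom.mul.comp f).compl₂ f + ((AddMonoidHom.mul.comp f).compl₂ f).flip

end Ring

namespace Matrix

variable {ι R M : Type*} [Fintype ι] [DecidableEq ι] [Ring R] [AddCommGroup M]
  {φ : Matrix ι ι R →+ Matrix ι ι R →+ M}

section
variable (horth : ∀ x y : Matrix ι ι R, x * y = 0 → y * x = 0 → φ x y = 0)
include horth

theorem apply_single_single_eq_zero {i j k l : ι} (hjk : j ≠ k) (hli : l ≠ i) (r s : R) :
    φ (single i j r) (single k l s) = 0 :=
  horth _ _ (single_mul_single_of_ne _ _ _ _ hjk _) (single_mul_single_of_ne _ _ _ _ hli _)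

theorem apply_single_diagCol_eq_apply_diagRow_single {i j : ι} (hij : i ≠ j) {a b s t : R}
    (h : b * s = a * t) :
    φ (single i j b) (single j j s) = φ (single i i a) (single i j t) := by
  have h0 := horth (single i i a + single i j b) (single j j s - single i j t)
    (by simp [add_mul, mul_sub, single_mul_single_of_ne _ _ _ _ hij,
      single_mul_single_of_ne _ _ _ _ hij.symm, h])
    (by simp [sub_mul, mul_add, single_mul_single_of_ne _ _ _ _ hij.symm])
  simp only [map_add, map_sub, AddMonoidHom.add_apply,
    apply_single_single_eq_zero horth hij hij.symm,
    apply_single_single_eq_zero horth hij.symm hij.symm, zero_add, add_zero, sub_eq_zero] at h0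
  exact h0

theorem apply_single_diagCol {i j : ι} (hij : i ≠ j) (w s : R) :
    φ (single i j w) (single j j s) = φ (single i j (w * s)) (single j j 1) := by
  rw [apply_single_diagCol_eq_apply_diagRow_single horth hij (one_mul (w * s)).symm,
    ← apply_single_diagCol_eq_apply_diagRow_single horth hij (by rw [mul_one, one_mul])]

theorem apply_diagRow_single {i j : ι} (hij : i ≠ j) (s w : R) :
    φ (single i i s) (single i j w) = φ (single i j (s * w)) (single j j 1) :=
  (apply_single_diagCol_eq_apply_diagRow_single horth hij (mul_one _)).symm

theorem apply_single_single_of_ne {i j l : ι} (hil : i ≠ l) (r s : R) :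
    φ (single i j r) (single j l s) = φ (single i l (r * s)) (single l l 1) := by
  obtain rfl | hjl := eq_or_ne j l
  · exact apply_single_diagCol horth hil r s
  have h0 := horth (single i j r - single i l (r * s)) (single j l s + single l l 1)
    (by simp [mul_add, sub_mul, single_mul_single_of_ne _ _ _ _ hjl,
      single_mul_single_of_ne _ _ _ _ hjl.symm])
    (by simp [mul_sub, add_mul, single_mul_single_of_ne _ _ _ _ hil.symm])
  simp only [map_add, map_sub, AddMonoidHom.sub_apply,
    apply_single_single_eq_zero horth hjl hil.symm,
    apply_single_single_eq_zero horth hjl.symm hil.symm, sub_zero, zero_sub, ← sub_eq_add_neg,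
    sub_eq_zero] at h0
  exact h0

theorem apply_diag_one (k : ι) (v : R) :
    φ (single k k v) 1 = φ (single k k v) (single k k 1) := by
  rw [← sum_single_one, map_sum]
  exact Fintype.sum_eq_single k fun m hm => apply_single_single_eq_zero horth hm.symm hm v 1

end

section
variable (hsymm : ∀ x y, φ x y = φ y x)
  (horth : ∀ x y : Matrix ι ι R, x * y = 0 → y * x = 0 → φ x y = 0)
include hsymm horth

theorem apply_single_diagRow {i j : ι} (hij : i ≠ j) (w s : R) :
    φ (single i j w) (single i i s) = φ (single i j (s * w)) (single j j 1) := by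
  rw [hsymm, apply_diagRow_single horth hij]

theorem apply_diagCol_single {i j : ι} (hij : i ≠ j) (a t : R) :
    φ (single j j a) (single i j t) = φ (single i j (t * a)) (single j j 1) := by
  rw [hsymm, apply_single_diagCol horth hij]

theorem apply_diag_add_apply_diag {i j : ι} (hij : i ≠ j) (r b p : R) :
    φ (single i i 1) (single i i (r * (b * p))) + φ (single j j (p * r)) (single j j b) =
      φ (single i j r) (single j i (b * p)) + φ (single i j (r * b)) (single j i p) := by
  -- On the `{i, j}` block these are `(1, p)ᵀ (1, r)` and `(r, -1)ᵀ b (p, -1)`, orthogonal since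
  -- `(1, r) · (r, -1) = 0 = (p, -1) · (1, p)`.
  have h0 := horth
    (single i i 1 + single i j r + single j i p + single j j (p * r))
    (single i i (r * (b * p)) - single i j (r * b) - single j i (b * p) + single j j b)
    (by simp [mul_add, add_mul, mul_sub, single_mul_single_of_ne _ _ _ _ hij,
      single_mul_single_of_ne _ _ _ _ hij.symm, mul_assoc])
    (by simp [mul_add, add_mul, sub_mul, single_mul_single_of_ne _ _ _ _ hij,
      single_mul_single_of_ne _ _ _ _ hij.symm, mul_assoc]; abel)
  simp only [map_add, map_sub, AddMonoidHom.add_apply] at h0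
  rw [apply_single_single_eq_zero horth hij hij.symm,
    apply_single_single_eq_zero horth hij.symm hij.symm, apply_single_single_eq_zero horth hij hij,
    apply_single_single_eq_zero horth hij.symm hij,
    apply_diagRow_single horth hij 1, apply_diagCol_single hsymm horth hij.symm 1,
    apply_single_diagRow hsymm horth hij r, apply_single_diagCol horth hij r b,
    apply_single_diagCol horth hij.symm p, apply_single_diagRow hsymm horth hij.symm p b,
    apply_diagCol_single hsymm horth hij (p * r), apply_diagRow_single horth hij.symm (p * r),
    hsymm (single j i p)] at h0
  simp only [one_mul, mul_one, mul_assoc] at h0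
  rw [← sub_eq_zero, ← h0]
  abel

theorem two_nsmul_apply_single_single_swap {i j : ι} (hij : i ≠ j) (r p : R) :
    2 • φ (single i j r) (single j i p) =
      φ (single i i 1) (single i i (r * p)) + φ (single j j (p * r)) (single j j 1) := by
  simpa [two_nsmul] using (apply_diag_add_apply_diag hsymm horth hij r 1 p).symm

theorem two_nsmul_apply_diag_diag {i j : ι} (hij : i ≠ j) (r b : R) :
    2 • φ (single j j r) (single j j b) = φ (single j j (b * r + r * b)) (single j j 1) := by
  have hrb := apply_diag_add_apply_diag hsymm horth hij r b 1
  have hswap := two_nsmul_apply_single_single_swap hsymm horth hij r b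
  have hswap' := two_nsmul_apply_single_single_swap hsymm horth hij (r * b) 1
  simp only [mul_one, one_mul] at hrb hswap'
  rw [single_add, map_add, AddMonoidHom.add_apply]
  apply add_left_cancel (a := 2 • φ (single i i 1) (single i i (r * b)))
  rw [← smul_add, hrb, smul_add, hswap, hswap']
  abel

theorem apply_single_one {i l : ι} (hil : i ≠ l) (v : R) :
    φ (single i l v) 1 = 2 • φ (single i l v) (single l l 1) := by
  rw [← sum_single_one, map_sum, Fintype.sum_eq_add i l hil
    fun m hm => apply_single_single_eq_zero horth (Ne.symm hm.2) hm.1 v 1,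
    apply_single_diagRow hsymm horth hil, apply_single_diagCol horth hil,
    one_mul, mul_one, two_nsmul]

theorem two_nsmul_apply_single_single_adj [Nontrivial ι] (i j l : ι) (r s : R) :
    2 • φ (single i j r) (single j l s) =
      φ (single i j r * single j l s + single j l s * single i j r) 1 := by
  obtain rfl | hil := eq_or_ne i l
  · rw [single_mul_single_same, single_mul_single_same]
    obtain rfl | hij := eq_or_ne i j
    · obtain ⟨k, hk⟩ := exists_ne i
      rw [← single_add, apply_diag_one horth, hsymm (single i i r),
        two_nsmul_apply_diag_diag hsymm horth hk]
    · rw [map_add, AddMonoidHom.add_apply, apply_diag_one horth,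
        apply_diag_one horth, two_nsmul_apply_single_single_swap hsymm horth hij,
        hsymm (single i i 1)]
  · rw [single_mul_single_same, single_mul_single_of_ne _ _ _ _ hil.symm, add_zero,
      apply_single_one hsymm horth hil, apply_single_single_of_ne horth hil]

theorem two_nsmul_apply_single_single [Nontrivial ι] (i j k l : ι) (r s : R) :
    2 • φ (single i j r) (single k l s) =
      φ (single i j r * single k l s + single k l s * single i j r) 1 := by
  obtain rfl | hjk := eq_or_ne j k
  · exact two_nsmul_apply_single_single_adj hsymm horth i j l r s
  obtain rfl | hli := eq_or_ne l i
  · rw [hsymm, add_comm]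
    exact two_nsmul_apply_single_single_adj hsymm horth k l j s r
  rw [apply_single_single_eq_zero horth hjk hli, single_mul_single_of_ne _ _ _ _ hjk,
    single_mul_single_of_ne _ _ _ _ hli, add_zero, map_zero, AddMonoidHom.zero_apply, smul_zero]

theorem two_nsmul_apply_eq_apply_jordan_one [Nontrivial ι] (x y : Matrix ι ι R) :
    2 • φ x y = φ (x * y + y * x) 1 := by
  have key : 2 • φ = (AddMonoidHom.mul + AddMonoidHom.mul.flip).compr₂ (φ.flip 1) := by
    refine ext_addMonoidHom fun i j => AddMonoidHom.ext fun r =>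
      ext_addMonoidHom fun k l => AddMonoidHom.ext fun s => ?_
    simpa using two_nsmul_apply_single_single hsymm horth i j k l r s
  simpa using DFunLike.congr_fun (DFunLike.congr_fun key x) y

end

end Matrix

section WeightedJordan
variable {A : Type*} [Ring A] (f : A →+ A)

def sqCommutator : A →+ A :=
  (AddMonoidHom.mulLeft (f 1 * f 1) - AddMonoidHom.mulRight (f 1 * f 1)).comp f

theorem sqCommutator_apply (z : A) : sqCommutator f z = f 1 * f 1 * f z - f z * (f 1 * f 1) :=
  rfl

variable {f}
  (hf : ∀ x y, 2 • (f x * f y + f y * f x) = f (x * y + y * x) * f 1 + f 1 * f (x * y + y * x))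
include hf

theorem sqCommutator_eq_zero_of_isIdempotentElem (h2 : IsUnit (2 : A)) {e : A}
    (he : IsIdempotentElem e) : sqCommutator f e = 0 := by
  have h := hf e e
  rw [he.eq, map_add, ← two_nsmul, ← two_nsmul, smul_mul_assoc, mul_smul_comm, ← smul_add,
    two_nsmul_inj_of_isUnit h2] at h
  rw [sqCommutator_apply, sub_eq_zero]
  exact commute_mul_self_of_add_mul_eq_two_nsmul h.symm

theorem two_nsmul_sqCommutator_jordan (x y : A) :
    2 • (sqCommutator f x * f y + f y * sqCommutator f x +
        (f x * sqCommutator f y + sqCommutator f y * f x)) =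
      sqCommutator f (x * y + y * x) * f 1 + f 1 * sqCommutator f (x * y + y * x) := by
  simp only [sqCommutator_apply]
  calc _ = f 1 * f 1 * (2 • (f x * f y + f y * f x)) -
        2 • (f x * f y + f y * f x) * (f 1 * f 1) := by noncomm_ring
    _ = _ := by rw [hf]; noncomm_ring

variable (h2 : IsUnit (2 : A)) (hsurj : Function.Surjective f)
include h2 hsurj

theorem commute_apply_one_mul_self
    (hanti : ∀ z, sqCommutator f z * f 1 + f 1 * sqCommutator f z = 0) (v : A) :
    Commute (f 1 * f 1) v := by
  obtain ⟨x, rfl⟩ := hsurj v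
  obtain ⟨u, hu⟩ := hsurj 1
  rw [Commute, SemiconjBy, ← sub_eq_zero, ← sqCommutator_apply]
  have h := two_nsmul_sqCommutator_jordan hf x u
  simp only [hanti, sqCommutator_apply f u, hu, mul_one, one_mul, sub_self, mul_zero, zero_mul,
    add_zero] at h
  rwa [← two_nsmul, ← smul_zero 2, two_nsmul_inj_of_isUnit h2, ← smul_zero 2,
    two_nsmul_inj_of_isUnit h2] at h

theorem commute_apply_one_of_commute_mul_self (hsq : ∀ v, Commute (f 1 * f 1) v) (v : A) :
    Commute (f 1) v := by
  obtain ⟨x, rfl⟩ := hsurj v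
  obtain ⟨u, hu⟩ := hsurj 1
  have h := (commute_add_mul_of_commute_mul_self (hsq (f (x * u + u * x)))).eq
  rw [← hf, hu, mul_one, one_mul, ← two_nsmul, mul_smul_comm, smul_mul_assoc, mul_smul_comm,
    smul_mul_assoc, two_nsmul_inj_of_isUnit h2, two_nsmul_inj_of_isUnit h2] at h
  exact h

theorem isUnit_and_mul_apply_jordan (hc : ∀ v, Commute (f 1) v) :
    IsUnit (f 1) ∧ ∀ x y, f 1 * f (x * y + y * x) = f x * f y + f y * f x := by
  have hjordan : ∀ x y, f 1 * f (x * y + y * x) = f x * f y + f y * f x := fun x y => by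
    rw [← two_nsmul_inj_of_isUnit h2, hf, (hc _).eq, two_nsmul]
  refine ⟨?_, hjordan⟩
  obtain ⟨u, hu⟩ := hsurj 1
  have h := hjordan u u
  rw [hu, mul_one, map_add, ← two_nsmul, mul_smul_comm, ← two_nsmul,
    two_nsmul_inj_of_isUnit h2] at h
  exact isUnit_iff_exists.mpr ⟨f (u * u), h, (hc _).eq ▸ h⟩

end WeightedJordan

namespace Matrix

variable {ι R : Type*} [Fintype ι] [DecidableEq ι] [Ring R]

theorem isIdempotentElem_single_one_s6 (k : ι) : IsIdempotentElem (single k k (1 : R)) := by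
  rw [IsIdempotentElem, single_mul_single_same, one_mul]

theorem single_mem_closure_isIdempotentElem {k l : ι} (hkl : k ≠ l) (u : R) :
    single k l u ∈ AddSubgroup.closure {e : Matrix ι ι R | IsIdempotentElem e} := by
  have he : IsIdempotentElem (single k k 1 + single k l u) := by
    simp [IsIdempotentElem, mul_add, add_mul, single_mul_single_of_ne _ _ _ _ hkl.symm]
  simpa using sub_mem (AddSubgroup.subset_closure (k := {e | IsIdempotentElem e}) he)
    (AddSubgroup.subset_closure (isIdempotentElem_single_one_s6 k))

theorem single_sub_single_mem_closure_isIdempotentElem {k l : ι} (hkl : k ≠ l) (r : R) :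
    single k k r - single l l r ∈
      AddSubgroup.closure {e : Matrix ι ι R | IsIdempotentElem e} := by
  -- `v * w` is the rank-one idempotent `(r, 1 - r)ᵀ (1, 1)` on the `{k, l}` block.
  set v := single k k r + single l k (1 - r)
  set w := single k k 1 + single k l (1 : R)
  have hwv : w * v = single k k 1 := by
    simp [v, w, mul_add, add_mul, single_mul_single_of_ne _ _ _ _ hkl,
      single_mul_single_of_ne _ _ _ _ hkl.symm, ← single_add]
  have hv : v * single k k 1 = v := by simp [v, add_mul]
  have he : IsIdempotentElem (v * w) := by
    rw [IsIdempotentElem, mul_assoc, ← mul_assoc w, hwv, ← mul_assoc, hv]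
  have hvw : v * w = single k k r + single k l r + single l k (1 - r) + single l l (1 - r) := by
    simp only [v, w, mul_add, add_mul, single_mul_single_same, mul_one]
    abel
  have hdiff : single k k r - single l l r =
      v * w - single k l r - single l k (1 - r) - single l l 1 := by
    rw [hvw, show single l l (1 - r) = single l l 1 - single l l r from
      map_sub (singleAddMonoidHom l l) 1 r]
    abel
  rw [hdiff]
  refine sub_mem (sub_mem (sub_mem (AddSubgroup.subset_closure he) ?_) ?_)
    (AddSubgroup.subset_closure (isIdempotentElem_single_one_s6 l))
  · exact single_mem_closure_isIdempotentElem hkl r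
  · exact single_mem_closure_isIdempotentElem hkl.symm (1 - r)

variable {f : Matrix ι ι R →+ Matrix ι ι R}
  (hf : ∀ x y, 2 • (f x * f y + f y * f x) = f (x * y + y * x) * f 1 + f 1 * f (x * y + y * x))
include hf

theorem sqCommutator_mul_add_mul_eq_zero [Nontrivial ι] (h2 : IsUnit (2 : Matrix ι ι R))
    (z : Matrix ι ι R) : sqCommutator f z * f 1 + f 1 * sqCommutator f z = 0 := by
  have hker :
      AddSubgroup.closure {e : Matrix ι ι R | IsIdempotentElem e} ≤ (sqCommutator f).ker :=
    (AddSubgroup.closure_le _).mpr fun e he => sqCommutator_eq_zero_of_isIdempotentElem hf h2 he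
  have hoff : ∀ {k l : ι}, k ≠ l → ∀ u : R, sqCommutator f (single k l u) = 0 :=
    fun hkl u => hker (single_mem_closure_isIdempotentElem hkl u)
  induction z using Matrix.induction_on' with
  | h_zero => simp
  | h_add p q hp hq =>
    rw [map_add, add_mul, mul_add, add_add_add_comm, hp, hq, add_zero]
  | h_std_basis k l r =>
    obtain hkl | rfl := ne_or_eq k l
    · simp [hoff hkl]
    obtain ⟨l, hl⟩ := exists_ne k
    have hsum : sqCommutator f (single k k r + single l l r) * f 1 +
        f 1 * sqCommutator f (single k k r + single l l r) = 0 := by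
      simpa [hoff hl, hoff hl.symm] using
        (two_nsmul_sqCommutator_jordan hf (single k l 1) (single l k r)).symm
    have hdiff : sqCommutator f (single k k r - single l l r) = 0 :=
      hker (single_sub_single_mem_closure_isIdempotentElem hl.symm r)
    have htwo : 2 • sqCommutator f (single k k r) =
        sqCommutator f (single k k r + single l l r) +
          sqCommutator f (single k k r - single l l r) := by
      rw [← map_nsmul, ← map_add, two_nsmul, add_add_sub_cancel]
    rw [← two_nsmul_inj_of_isUnit h2, smul_zero, smul_add, ← smul_mul_assoc, ← mul_smul_comm,
      htwo, hdiff, add_zero, hsum]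

end Matrix

/-- Let `R` be a unital ring with `2` invertible and `A = Mₙ(R)`, `n ≥ 2`.
Every surjective additive `T : A → A` with `T x ∘ T y = 0` whenever `xy = yx = 0`
is a weighted Jordan homomorphism. -/
theorem stmt6 {R : Type*} [Ring R] (h2 : IsUnit (2 : R)) (n : ℕ) (hn : 2 ≤ n)
    (T : Matrix (Fin n) (Fin n) R → Matrix (Fin n) (Fin n) R)
    (hadd : ∀ x y, T (x + y) = T x + T y)
    (hsurj : Function.Surjective T)
    (hz : ∀ x y, x * y = 0 → y * x = 0 → T x * T y + T y * T x = 0) :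
    T 1 ∈ Set.center (Matrix (Fin n) (Fin n) R) ∧ IsUnit (T 1) ∧
      ∀ x y, T 1 * T (x * y + y * x) = T x * T y + T y * T x := by
  let f : Matrix (Fin n) (Fin n) R →+ Matrix (Fin n) (Fin n) R := AddMonoidHom.mk' T hadd
  have : Nontrivial (Fin n) := Fin.nontrivial_iff_two_le.mpr hn
  have h2' : IsUnit (2 : Matrix (Fin n) (Fin n) R) := by
    simpa only [map_ofNat] using h2.map (scalar (Fin n) : R →+* Matrix (Fin n) (Fin n) R)
  have hf : ∀ x y,
      2 • (f x * f y + f y * f x) = f (x * y + y * x) * f 1 + f 1 * f (x * y + y * x) :=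
    two_nsmul_apply_eq_apply_jordan_one (φ := jordanForm f) (fun _ _ => add_comm _ _) hz
  have hc := commute_apply_one_of_commute_mul_self hf h2' hsurj
    (commute_apply_one_mul_self hf h2' hsurj (sqCommutator_mul_add_mul_eq_zero hf h2'))
  obtain ⟨hunit, hjordan⟩ := isUnit_and_mul_apply_jordan hf h2' hsurj hc
  exact ⟨Semigroup.mem_center_iff.mpr fun v => (hc v).eq.symm, hunit, hjordan⟩
end

section
/- Let K be an algebraically closed field with char(K) ≠ 2, 3, and let t ∈ M₃(K) be a matrix that is not a scalar matrix. Then there exists y ∈ M₃(K) such that the four matrices t, t∘y, (t∘y)∘y, ((t∘y)∘y)∘y are linearly independent over K. -/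
/-- The Jordan product `x ∘ y = xy + yx`. -/
def jordan {A : Type*} [Mul A] [Add A] (x y : A) : A := x * y + y * x

open Matrix

private lemma key {K : Type*} [Field K] (h3 : (3:K) ≠ 0) (a b c d e f : K) :
    LinearIndependent K
      ![(!![0,a,d;1,b,e;0,c,f] : Matrix (Fin 3) (Fin 3) K),
        !![0,d+c,f;0,e,1;1,f+b,e],
        !![1,2*f+b,e;0,1,0;0,2*e,2],
        !![0,3*e,3;0,0,0;0,3,0]] := by
  rw [Fintype.linearIndependent_iff]
  intro g hg
  rw [Fin.sum_univ_four] at hg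
  have e10 := congrFun (congrFun hg 1) 0
  have e12 := congrFun (congrFun hg 1) 2
  have e00 := congrFun (congrFun hg 0) 0
  have e02 := congrFun (congrFun hg 0) 2
  simp at e10 e12 e00 e02
  have hg0 : g 0 = 0 := e10
  have hg2 : g 2 = 0 := e00
  have hg1 : g 1 = 0 := by linear_combination e12 - e * e10
  have hg3 : g 3 = 0 := by
    have h33 : (3:K) * g 3 = 0 := by
      linear_combination e02 - d * hg0 - f * hg1 - e * hg2
    exact (mul_eq_zero.mp h33).resolve_left h3
  intro i; fin_cases i <;> assumption

private lemma key2 {K : Type*} [Field K] (h3 : (3:K) ≠ 0) (a b c d e f : K) :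
    LinearIndependent K
      ![(!![0,a,d;1,b,e;0,c,f] : Matrix (Fin 3) (Fin 3) K),
        jordan !![0,a,d;1,b,e;0,c,f] !![0,0,1;0,0,0;0,1,0],
        jordan (jordan !![0,a,d;1,b,e;0,c,f] !![0,0,1;0,0,0;0,1,0]) !![0,0,1;0,0,0;0,1,0],
        jordan (jordan (jordan !![0,a,d;1,b,e;0,c,f] !![0,0,1;0,0,0;0,1,0])
          !![0,0,1;0,0,0;0,1,0]) !![0,0,1;0,0,0;0,1,0]] := by
  have h1 : jordan (!![0,a,d;1,b,e;0,c,f] : Matrix (Fin 3) (Fin 3) K) !![0,0,1;0,0,0;0,1,0]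
      = !![0,d+c,f;0,e,1;1,f+b,e] := by
    rw [jordan, Matrix.mul_fin_three, Matrix.mul_fin_three]
    ext i j; fin_cases i <;> fin_cases j <;>
      simp [Matrix.add_apply, Matrix.vecHead, Matrix.vecTail] <;> ring
  have h2 : jordan (!![0,d+c,f;0,e,1;1,f+b,e] : Matrix (Fin 3) (Fin 3) K) !![0,0,1;0,0,0;0,1,0]
      = !![1,2*f+b,e;0,1,0;0,2*e,2] := by
    rw [jordan, Matrix.mul_fin_three, Matrix.mul_fin_three]
    ext i j; fin_cases i <;> fin_cases j <;>
      simp [Matrix.add_apply, Matrix.vecHead, Matrix.vecTail] <;> ring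
  have h3' : jordan (!![1,2*f+b,e;0,1,0;0,2*e,2] : Matrix (Fin 3) (Fin 3) K) !![0,0,1;0,0,0;0,1,0]
      = !![0,3*e,3;0,0,0;0,3,0] := by
    rw [jordan, Matrix.mul_fin_three, Matrix.mul_fin_three]
    ext i j; fin_cases i <;> fin_cases j <;>
      simp [Matrix.add_apply, Matrix.vecHead, Matrix.vecTail] <;> ring
  simpa only [h1, h2, h3'] using key h3 a b c d e f

private lemma step1 {K : Type*} [Field K] (t : Matrix (Fin 3) (Fin 3) K)
    (ht : ∀ lam : K, t ≠ lam • (1 : Matrix (Fin 3) (Fin 3) K)) :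
    ∃ v : Fin 3 → K, LinearIndependent K ![v, t.mulVec v] := by
  by_contra hcon
  push_neg at hcon
  have hev : ∀ v : Fin 3 → K, v ≠ 0 → ∃ cc : K, cc • v = t.mulVec v := by
    intro v hv0
    by_contra hc
    push_neg at hc
    exact hcon v ((LinearIndependent.pair_iff' hv0).mpr hc)
  obtain ⟨c0, hc0⟩ := hev ![1,0,0] (by intro h; simpa using congrFun h 0)
  obtain ⟨c1, hc1⟩ := hev ![0,1,0] (by intro h; simpa using congrFun h 1)
  obtain ⟨c2, hc2⟩ := hev ![0,0,1] (by intro h; simpa using congrFun h 2)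
  obtain ⟨c3, hc3⟩ := hev ![1,1,0] (by intro h; simpa using congrFun h 0)
  obtain ⟨c4, hc4⟩ := hev ![1,0,1] (by intro h; simpa using congrFun h 0)
  have k00 := congrFun hc0 0
  have k10 := congrFun hc0 1
  have k20 := congrFun hc0 2
  have k01 := congrFun hc1 0
  have k21 := congrFun hc1 2
  have k02 := congrFun hc2 0
  have k12 := congrFun hc2 1
  have m0 := congrFun hc3 0
  have m1 := congrFun hc3 1
  have n0 := congrFun hc4 0
  have n2 := congrFun hc4 2
  simp [Matrix.mulVec, dotProduct, Fin.sum_univ_three] at k00 k10 k20 k01 k21 k02 k12 m0 m1 n0 n2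
  apply ht (t 0 0)
  ext i j
  fin_cases i <;> fin_cases j <;> simp [Matrix.smul_apply, Matrix.one_apply]
  · linear_combination -k01
  · linear_combination -k02
  · linear_combination -k10
  · linear_combination m0 - m1 - k01 + k10
  · linear_combination -k12
  · linear_combination -k20
  · linear_combination -k21
  · linear_combination n0 - n2 - k02 + k20

/-- Conjugation-type linear map `x ↦ P * x * Q`. -/
private def conjM {K : Type*} [Field K] (P Q : Matrix (Fin 3) (Fin 3) K) :
    Matrix (Fin 3) (Fin 3) K →ₗ[K] Matrix (Fin 3) (Fin 3) K where
  toFun x := P * x * Q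
  map_add' x y := by simp [Matrix.mul_add, Matrix.add_mul]
  map_smul' c x := by simp [Matrix.mul_smul, Matrix.smul_mul]

@[simp] private lemma conjM_apply {K : Type*} [Field K] (P Q x : Matrix (Fin 3) (Fin 3) K) :
    conjM P Q x = P * x * Q := rfl

/-- If `t ∈ M₃(K)` is not a scalar matrix (`K` algebraically closed,
char ≠ 2, 3), then there exists `y` such that `t, t∘y, (t∘y)∘y, ((t∘y)∘y)∘y`
are linearly independent over `K`. -/
theorem stmt11 {K : Type*} [Field K] [IsAlgClosed K]
    (hch2 : (2 : K) ≠ 0) (hch3 : (3 : K) ≠ 0)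
    (t : Matrix (Fin 3) (Fin 3) K)
    (ht : ∀ lam : K, t ≠ lam • (1 : Matrix (Fin 3) (Fin 3) K)) :
    ∃ y : Matrix (Fin 3) (Fin 3) K, LinearIndependent K
      ![t, jordan t y, jordan (jordan t y) y, jordan (jordan (jordan t y) y) y] := by
  classical
  obtain ⟨v, hvli⟩ := step1 t ht
  set u := t.mulVec v with hu
  have hlt : Submodule.span K (Set.range ![v, u]) < ⊤ := by
    apply span_lt_top_of_card_lt_finrank
    have h1 : (Set.range ![v, u]).toFinset.card ≤ 2 := by
      rw [Set.toFinset_card]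
      simpa using Fintype.card_range_le (f := ![v, u])
    have h2 : Module.finrank K (Fin 3 → K) = 3 := Module.finrank_fin_fun K
    omega
  obtain ⟨w, -, hw⟩ := SetLike.exists_of_lt hlt
  have hli3 : LinearIndependent K ![v, u, w] := by
    have hsnoc : ![v, u, w] = Fin.snoc ![v, u] w := by
      funext i; fin_cases i <;> simp [Fin.snoc] <;> rfl
    rw [hsnoc]
    exact linearIndependent_fin_snoc.mpr ⟨hvli, hw⟩
  set P : Matrix (Fin 3) (Fin 3) K := Matrix.of fun i j => ![v, u, w] j i with hPdef
  have hPunit : IsUnit P := by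
    have hrows : LinearIndependent K (fun i => Pᵀ i) := hli3
    exact linearIndependent_cols_iff_isUnit.mp hrows
  have hdet : IsUnit P.det := (Matrix.isUnit_iff_isUnit_det P).mp hPunit
  have hPP : P * P⁻¹ = 1 := Matrix.mul_nonsing_inv P hdet
  have hPP' : P⁻¹ * P = 1 := Matrix.nonsing_inv_mul P hdet
  have hL : ∀ x : Matrix (Fin 3) (Fin 3) K, P⁻¹ * (P * x) = x := fun x => by
    rw [← Matrix.mul_assoc, hPP', Matrix.one_mul]
  have hR : ∀ x : Matrix (Fin 3) (Fin 3) K, x * P⁻¹ * P = x := fun x => by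
    rw [Matrix.mul_assoc, hPP', Matrix.mul_one]
  have hL' : ∀ x : Matrix (Fin 3) (Fin 3) K, P * (P⁻¹ * x) = x := fun x => by
    rw [← Matrix.mul_assoc, hPP, Matrix.one_mul]
  have hR' : ∀ x : Matrix (Fin 3) (Fin 3) K, x * P * P⁻¹ = x := fun x => by
    rw [Matrix.mul_assoc, hPP, Matrix.mul_one]
  set T := P⁻¹ * t * P with hT
  have hcol : ∀ i, T i 0 = (1 : Matrix (Fin 3) (Fin 3) K) i 1 := by
    intro i
    have h1 : ∀ k, (t * P) k 0 = P k 1 := by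
      intro k
      simp [Matrix.mul_apply, hPdef, hu, Matrix.mulVec, dotProduct, Fin.sum_univ_three]
    calc T i 0 = (P⁻¹ * (t * P)) i 0 := by rw [hT, Matrix.mul_assoc]
      _ = ∑ k, P⁻¹ i k * (t * P) k 0 := by rw [Matrix.mul_apply]
      _ = ∑ k, P⁻¹ i k * P k 1 := Finset.sum_congr rfl fun k _ => by rw [h1 k]
      _ = (P⁻¹ * P) i 1 := by rw [Matrix.mul_apply]
      _ = (1 : Matrix (Fin 3) (Fin 3) K) i 1 := by rw [hPP']
  have h00 : T 0 0 = 0 := by rw [hcol 0]; simp [Matrix.one_apply]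
  have h10 : T 1 0 = 1 := by rw [hcol 1]; simp [Matrix.one_apply]
  have h20 : T 2 0 = 0 := by rw [hcol 2]; simp [Matrix.one_apply]
  have hTform : T = !![0, T 0 1, T 0 2; 1, T 1 1, T 1 2; 0, T 2 1, T 2 2] := by
    ext i j; fin_cases i <;> fin_cases j <;> simp [h00, h10, h20]
  set Y : Matrix (Fin 3) (Fin 3) K := !![0,0,1;0,0,0;0,1,0] with hY
  have hLI : LinearIndependent K
      ![T, jordan T Y, jordan (jordan T Y) Y, jordan (jordan (jordan T Y) Y) Y] := by
    have := key2 (K := K) hch3 (T 0 1) (T 1 1) (T 2 1) (T 0 2) (T 1 2) (T 2 2)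
    rw [← hTform] at this
    exact this
  set φ := conjM P P⁻¹ with hφ
  have hker : LinearMap.ker φ = ⊥ := by
    rw [LinearMap.ker_eq_bot']
    intro m hm
    have hm' : P * m * P⁻¹ = 0 := hm
    have hmm : m = P⁻¹ * (P * m * P⁻¹) * P := by
      rw [Matrix.mul_assoc P m P⁻¹, hL (m * P⁻¹), hR m]
    rw [hm'] at hmm
    simpa using hmm
  have hφT : φ T = t := by
    show P * (P⁻¹ * t * P) * P⁻¹ = t
    rw [Matrix.mul_assoc P⁻¹ t P, hL' (t * P), hR' t]
  have hmul : ∀ x z : Matrix (Fin 3) (Fin 3) K, (P*x*P⁻¹) * (P*z*P⁻¹) = P * (x*z) * P⁻¹ := by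
    intro x z
    simp only [Matrix.mul_assoc]
    rw [hL (z * P⁻¹)]
  have hjordan : ∀ x z : Matrix (Fin 3) (Fin 3) K, φ (jordan x z) = jordan (φ x) (φ z) := by
    intro x z
    show P * (jordan x z) * P⁻¹ = jordan (P*x*P⁻¹) (P*z*P⁻¹)
    rw [jordan, jordan, hmul, hmul, Matrix.mul_add, Matrix.add_mul]
  refine ⟨P * Y * P⁻¹, ?_⟩
  have hmap := hLI.map' φ hker
  have hφY : φ Y = P * Y * P⁻¹ := rfl
  have hfam : (φ ∘ ![T, jordan T Y, jordan (jordan T Y) Y, jordan (jordan (jordan T Y) Y) Y]) =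
      ![t, jordan t (P * Y * P⁻¹), jordan (jordan t (P * Y * P⁻¹)) (P * Y * P⁻¹),
        jordan (jordan (jordan t (P * Y * P⁻¹)) (P * Y * P⁻¹)) (P * Y * P⁻¹)] := by
    funext i
    fin_cases i
    · exact hφT
    · show φ (jordan T Y) = _
      rw [hjordan, hφT, hφY]; rfl
    · show φ (jordan (jordan T Y) Y) = _
      rw [hjordan, hjordan, hφT, hφY]; rfl
    · show φ (jordan (jordan (jordan T Y) Y) Y) = _
      rw [hjordan, hjordan, hjordan, hφT, hφY]; rfl
  rw [hfam] at hmap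
  exact hmap
end

section
/- Let K be a field with char(K) ≠ 2, 3, λ ∈ K, t the 3×3 Jordan block with eigenvalue λ (ones on the superdiagonal), and y the 3×3 matrix with ones on the subdiagonal and zeros elsewhere. Then t, t∘y, (t∘y)∘y, ((t∘y)∘y)∘y are linearly independent over K. -/
open Matrix

theorem LinearIndependent.of_isLowerTriangular_eval {ι R M : Type*} [Fintype ι] [LinearOrder ι]
    [CommRing R] [IsDomain R] [AddCommGroup M] [Module R M] (v : ι → M) (f : ι → M →ₗ[R] R)
    (hzero : ∀ i j, i < j → f i (v j) = 0) (hdiag : ∀ i, f i (v i) ≠ 0) :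
    LinearIndependent R v := by
  let A : Matrix ι ι R := .of fun i j => f i (v j)
  have hdet : A.det ≠ 0 := by
    rw [det_of_isLowerTriangular A fun i j hij => hzero i j hij]
    exact Finset.prod_ne_zero_iff.2 fun i _ => hdiag i
  exact .of_comp (LinearMap.pi f) (linearIndependent_cols_of_det_ne_zero hdet)

section JordanBlock

variable {R : Type*} [CommRing R] (lam : R)

theorem jordanBlock_fin_three_eq :
    lam • (1 : Matrix (Fin 3) (Fin 3) R) + single 0 1 1 + single 1 2 1 =
      !![lam, 1, 0; 0, lam, 1; 0, 0, lam] := by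
  ext i j; fin_cases i <;> fin_cases j <;> simp

theorem subdiagShift_fin_three_eq :
    (single 1 0 1 + single 2 1 1 : Matrix (Fin 3) (Fin 3) R) = !![0, 0, 0; 1, 0, 0; 0, 1, 0] := by
  ext i j; fin_cases i <;> fin_cases j <;> simp

theorem jordanBlock_jordan_subdiagShift :
    jordan !![lam, 1, 0; 0, lam, 1; 0, 0, lam] !![0, 0, 0; 1, 0, 0; 0, 1, 0] =
      !![1, 0, 0; 2 * lam, 2, 0; 0, 2 * lam, 1] := by
  ext i j; fin_cases i <;> fin_cases j <;> simp [jordan] <;> ring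

theorem jordanBlock_jordan_subdiagShift_jordan_subdiagShift :
    jordan (jordan !![lam, 1, 0; 0, lam, 1; 0, 0, lam] !![0, 0, 0; 1, 0, 0; 0, 1, 0])
        !![0, 0, 0; 1, 0, 0; 0, 1, 0] =
      !![0, 0, 0; 3, 0, 0; 4 * lam, 3, 0] := by
  rw [jordanBlock_jordan_subdiagShift]
  ext i j; fin_cases i <;> fin_cases j <;> simp [jordan] <;> ring

theorem jordanBlock_jordan_subdiagShift_jordan_subdiagShift_jordan_subdiagShift :
    jordan (jordan (jordan !![lam, 1, 0; 0, lam, 1; 0, 0, lam] !![0, 0, 0; 1, 0, 0; 0, 1, 0])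
        !![0, 0, 0; 1, 0, 0; 0, 1, 0]) !![0, 0, 0; 1, 0, 0; 0, 1, 0] =
      !![0, 0, 0; 0, 0, 0; 6, 0, 0] := by
  rw [jordanBlock_jordan_subdiagShift_jordan_subdiagShift]
  ext i j; fin_cases i <;> fin_cases j <;> simp [jordan]; norm_num

end JordanBlock

/-- For `t = λI + E₁₂ + E₂₃` (a 3×3 Jordan block with eigenvalue `λ`)
and `y = E₂₁ + E₃₂`, over a field of characteristic ≠ 2, 3, the matrices
`t, t∘y, (t∘y)∘y, ((t∘y)∘y)∘y` are linearly independent. -/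
theorem stmt12 {K : Type*} [Field K] (hch2 : (2 : K) ≠ 0) (hch3 : (3 : K) ≠ 0)
    (lam : K)
    (t : Matrix (Fin 3) (Fin 3) K)
    (ht : t = lam • (1 : Matrix (Fin 3) (Fin 3) K) +
      Matrix.single 0 1 1 + Matrix.single 1 2 1)
    (y : Matrix (Fin 3) (Fin 3) K)
    (hy : y = Matrix.single 1 0 1 + Matrix.single 2 1 1) :
    LinearIndependent K
      ![t, jordan t y, jordan (jordan t y) y, jordan (jordan (jordan t y) y) y] := by
  rw [ht, hy, jordanBlock_fin_three_eq, subdiagShift_fin_three_eq,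
    jordanBlock_jordan_subdiagShift_jordan_subdiagShift_jordan_subdiagShift,
    jordanBlock_jordan_subdiagShift_jordan_subdiagShift, jordanBlock_jordan_subdiagShift]
  have hch6 : (6 : K) ≠ 0 := (show (2 * 3 : K) = 6 by norm_num) ▸ mul_ne_zero hch2 hch3
  refine .of_isLowerTriangular_eval _
    ![entryLinearMap K K 0 1, entryLinearMap K K 0 0, entryLinearMap K K 1 0,
      entryLinearMap K K 2 0] ?_ ?_
  · intro i j hij
    fin_cases i <;> fin_cases j <;> simp at hij ⊢
  · intro i
    fin_cases i <;> simp [hch3, hch6]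
end

section
/- Let A be a commutative unital prime ring with char(A) ≠ 2 and let S, T: A → A be additive maps with T bijective and S(x²) = T(x)² for all x ∈ A. Then T is a weighted Jordan homomorphism: c = T(1) is invertible and c·T(x∘y) = T(x)∘T(y) for all x, y ∈ A. -/
/-!
Polarizing `S (x²) = (T x)²` gives `S (x ∘ y) = 2 T(x) T(y)`; taking `y = 1` and cancelling `2`
shows `S = T · c` with `c = T 1`. Then `c · T(x ∘ y) = S (x ∘ y) = T(x) ∘ T(y)`, and if `T u = 1`
then `T (u²) · c = S (u²) = 1`, so `c` is a unit.
-/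

section SquarePreserving

variable {A : Type*} [CommRing A] {S T : A → A}

theorem map_jordan_eq_two_mul_of_map_sq (hS : ∀ x y : A, S (x + y) = S x + S y)
    (hT : ∀ x y : A, T (x + y) = T x + T y) (h : ∀ x : A, S (x ^ 2) = T x ^ 2) (x y : A) :
    S (x * y + y * x) = 2 * T x * T y := by
  have hxy := h (x + y)
  rw [show (x + y) ^ 2 = x ^ 2 + (x * y + y * x) + y ^ 2 by ring, hS, hS, h x, h y, hT] at hxy
  linear_combination hxy

theorem eq_mul_map_one_of_map_jordan [NoZeroDivisors A] (hch : (2 : A) ≠ 0)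
    (hS : ∀ x y : A, S (x + y) = S x + S y) (hST : ∀ x y : A, S (x * y + y * x) = 2 * T x * T y)
    (x : A) : S x = T x * T 1 := by
  have hx1 := hST x 1
  rw [mul_one, one_mul, hS] at hx1
  exact mul_left_cancel₀ hch (by linear_combination hx1)

theorem isUnit_of_map_sq_of_eq_mul (hT : Function.Surjective T) (c : A)
    (hSc : ∀ x : A, S x = T x * c) (h : ∀ x : A, S (x ^ 2) = T x ^ 2) : IsUnit c := by
  obtain ⟨u, hu⟩ := hT 1
  have hu2 := h u
  rw [hSc, hu] at hu2
  exact .of_mul_eq_one (T (u ^ 2)) (by linear_combination hu2)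

end SquarePreserving

/-- Let `A` be a commutative unital prime ring (an integral domain)
with char ≠ 2, and `S, T : A → A` additive with `T` bijective and `S(x²) = T(x)²`.
Then `T` is a weighted Jordan homomorphism. -/
theorem stmt15 {A : Type*} [CommRing A] [IsDomain A] (hch : (2 : A) ≠ 0)
    (S T : A → A)
    (hS : ∀ x y : A, S (x + y) = S x + S y)
    (hT : ∀ x y : A, T (x + y) = T x + T y)
    (hbij : Function.Bijective T)
    (h : ∀ x : A, S (x ^ 2) = (T x) ^ 2) :
    IsUnit (T 1) ∧ ∀ x y : A, T 1 * T (x * y + y * x) = T x * T y + T y * T x := by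
  have hST := map_jordan_eq_two_mul_of_map_sq hS hT h
  have hSc := eq_mul_map_one_of_map_jordan hch hS hST
  refine ⟨isUnit_of_map_sq_of_eq_mul hbij.2 (T 1) hSc h, fun x y => ?_⟩
  linear_combination hST x y - hSc (x * y + y * x)
end

section
/- Let A be the Grassmann (exterior) algebra over a field F of characteristic ≠ 2 with two generators u, v (so A has basis 1, u, v, uv with u² = v² = 0 and uv = −vu), and let λ: A → F be the algebra homomorphism giving the scalar component. Define T(x) = x + λ(x)u and S(x) = x + 2λ(x)u. Then S and T are linear, T is bijective, S(x²) = T(x)² for all x ∈ A, but T(1) = 1 + u is not central, so T is not a weighted Jordan homomorphism. -/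
/-!
In the Grassmann algebra every `x` satisfies `x u + u x = 2 λ(x) u`: the generators anticommute
with `u`, and the part of `x` that does not anticommute with `u` is `λ(x)` plus a multiple of
`uv`, which annihilates `u`. Together with `u² = 0` this gives
`(x + λ(x) u)² = x² + 2 λ(x)² u = S(x²)`. Since `λ(u) = 0`, `T` is a transvection, hence
bijective. Finally, if `1 + u` were central then `uv = vu = -uv`, so `2 uv = 0`; but `uv` is a
basis vector of `⋀² F²`.
-/

open ExteriorAlgebra

section GrassmannPair

variable {R A : Type*} [CommRing R] [Ring A] [Algebra R A] (φ : A →ₐ[R] R) {u v : A}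

/-- The form of `mul_add_mul_eq_of_mem_adjoin_pair` that is stable under products. -/
theorem exists_mul_eq_of_mem_adjoin_pair (huu : u * u = 0) (hvv : v * v = 0)
    (huv : u * v + v * u = 0) (hu : φ u = 0) (hv : φ v = 0) {x : A}
    (hx : x ∈ Algebra.adjoin R {u, v}) :
    ∃ c : R, u * x = φ x • u + c • (u * v) ∧ x * u = φ x • u - c • (u * v) ∧
      x * (u * v) = φ x • (u * v) ∧ u * v * x = φ x • (u * v) := by
  have hvu : v * u = -(u * v) := eq_neg_of_add_eq_zero_right huv
  induction hx using Algebra.adjoin_induction with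
  | mem x hx =>
    have huuv : u * (u * v) = 0 := by rw [← mul_assoc, huu, zero_mul]
    have huvu : u * v * u = 0 := by
      rw [mul_assoc, hvu, mul_neg, ← mul_assoc, huu, zero_mul, neg_zero]
    have hvuv : v * (u * v) = 0 := by
      rw [← mul_assoc, hvu, neg_mul, mul_assoc, hvv, mul_zero, neg_zero]
    have huvv : u * v * v = 0 := by rw [mul_assoc, hvv, mul_zero]
    rcases hx with rfl | rfl
    · exact ⟨0, by simp [hu, huu, huuv, huvu]⟩
    · exact ⟨1, by simp [hv, hvu, hvuv, huvv]⟩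
  | algebraMap r =>
    exact ⟨0, by simp [Algebra.smul_def, Algebra.commutes]⟩
  | add x y _ _ hx hy =>
    obtain ⟨c, h₁, h₂, h₃, h₄⟩ := hx
    obtain ⟨d, k₁, k₂, k₃, k₄⟩ := hy
    refine ⟨c + d, ?_, ?_, ?_, ?_⟩ <;> rw [map_add]
    · rw [mul_add, h₁, k₁]; module
    · rw [add_mul, h₂, k₂]; module
    · rw [add_mul, h₃, k₃]; module
    · rw [mul_add, h₄, k₄]; module
  | mul x y _ _ hx hy =>
    obtain ⟨c, h₁, h₂, h₃, h₄⟩ := hx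
    obtain ⟨d, k₁, k₂, k₃, k₄⟩ := hy
    refine ⟨φ x * d + c * φ y, ?_, ?_, ?_, ?_⟩ <;> rw [map_mul]
    · rw [← mul_assoc, h₁, add_mul, smul_mul_assoc, smul_mul_assoc, k₁, k₄]; module
    · rw [mul_assoc, k₂, mul_sub, mul_smul_comm, mul_smul_comm, h₂, h₃]; module
    · rw [mul_assoc, k₃, mul_smul_comm, h₃]; module
    · rw [← mul_assoc, h₄, smul_mul_assoc, k₄]; module

theorem mul_add_mul_eq_of_mem_adjoin_pair (huu : u * u = 0) (hvv : v * v = 0)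
    (huv : u * v + v * u = 0) (hu : φ u = 0) (hv : φ v = 0) {x : A}
    (hx : x ∈ Algebra.adjoin R {u, v}) :
    x * u + u * x = (2 * φ x) • u := by
  obtain ⟨c, h₁, h₂, -⟩ := exists_mul_eq_of_mem_adjoin_pair φ huu hvv huv hu hv hx
  rw [h₁, h₂]
  module

end GrassmannPair

theorem add_smul_sq_of_mul_add_mul {R A : Type*} [CommRing R] [Ring A] [Algebra R A]
    (φ : A →ₐ[R] R) {u x : A} (huu : u * u = 0) (hx : x * u + u * x = (2 * φ x) • u) :
    (x + φ x • u) ^ 2 = x ^ 2 + (2 * φ (x ^ 2)) • u := calc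
  (x + φ x • u) ^ 2 = x ^ 2 + φ x • (x * u + u * x) + (φ x * φ x) • (u * u) := by
    simp only [sq, add_mul, mul_add, smul_mul_assoc, mul_smul_comm, smul_smul, smul_add]; abel
  _ = x ^ 2 + (2 * φ (x ^ 2)) • u := by
    rw [hx, huu, smul_zero, add_zero, smul_smul, map_pow]; ring_nf

theorem one_add_notMem_center {K A : Type*} [Field K] [Ring A] [Algebra K A] (h2 : (2 : K) ≠ 0)
    {u v : A} (huv : u * v + v * u = 0) (hne : u * v ≠ 0) : 1 + u ∉ Set.center A := by
  intro hc
  have hcomm : u * v = v * u := by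
    simpa [add_mul, mul_add] using ((Set.mem_center_iff.mp hc).comm v).eq
  apply hne
  have : (2 : K) • (u * v) = 0 := by rw [two_smul]; nth_rw 2 [hcomm]; exact huv
  exact (smul_eq_zero.mp this).resolve_left h2

namespace ExteriorAlgebra

theorem algebraMapInv_ι {R M : Type*} [CommRing R] [AddCommGroup M] [Module R M] (m : M) :
    algebraMapInv (ι R m) = 0 := by
  simp [algebraMapInv]

theorem adjoin_image_ι_eq_top {R M : Type*} [CommRing R] [AddCommGroup M] [Module R M] {s : Set M}
    (hs : Submodule.span R s = ⊤) : Algebra.adjoin R (ι R '' s) = ⊤ := by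
  rw [← Algebra.adjoin_span, ← Submodule.map_span, hs, Submodule.map_top]
  exact CliffordAlgebra.adjoin_range_ι

theorem ι_mul_ι_ne_zero {K E : Type*} [Field K] [AddCommGroup E] [Module K E] {m n : E}
    (h : LinearIndependent K ![m, n]) : ι K m * ι K n ≠ 0 := by
  have hid (e : Fin 2 ↪o Fin 2) : ⇑e = id := by
    have h : e 0 < e 1 := e.lt_iff_lt.2 Fin.zero_lt_one
    funext i
    fin_cases i <;> simp <;> omega
  have := (exteriorPower.ιMulti_family_linearIndependent_field (n := 2) h).ne_zero
    ⟨Finset.univ, by simp⟩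
  rw [exteriorPower.ιMulti_family, hid, Function.comp_id, Ne, ← Submodule.coe_eq_zero,
    exteriorPower.ιMulti_apply_coe, ιMulti_apply] at this
  simpa [List.ofFn_succ] using this

theorem adjoin_ι_pi_single_fin_two {R : Type*} [CommRing R] :
    Algebra.adjoin R {ι R (Pi.single 0 1 : Fin 2 → R), ι R (Pi.single 1 1)} = ⊤ := by
  have hspan : Submodule.span R {(Pi.single 0 1 : Fin 2 → R), Pi.single 1 1} = ⊤ := by
    rw [← (Pi.basisFun R (Fin 2)).span_eq]
    congr 1
    ext
    simp [Fin.exists_fin_two, eq_comm]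
  rw [← Set.image_pair, adjoin_image_ι_eq_top hspan]

theorem ι_pi_single_mul_ι_pi_single_ne_zero {K : Type*} [Field K] :
    ι K (Pi.single 0 1 : Fin 2 → K) * ι K (Pi.single 1 1) ≠ 0 :=
  ι_mul_ι_ne_zero <| LinearIndependent.pair_iff.2 fun s t h =>
    ⟨by simpa using congrFun h 0, by simpa using congrFun h 1⟩

end ExteriorAlgebra

/-- In the Grassmann algebra `A` on two generators `u, v` over a field
`F` of characteristic ≠ 2, with `λ : A → F` the scalar-component homomorphism, the
maps `T x = x + λ(x) u` and `S x = x + 2 λ(x) u` are linear, `T` is bijective,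
`S(x²) = T(x)²` for all `x`, but `T 1 = 1 + u` is not central (so `T` is not a
weighted Jordan homomorphism). -/
theorem stmt16 {F : Type*} [Field F] (hch : (2 : F) ≠ 0) :
    let A := ExteriorAlgebra F (Fin 2 → F)
    let u : A := ExteriorAlgebra.ι F (Pi.single 0 1)
    let lam : A → F := ExteriorAlgebra.algebraMapInv
    let T : A → A := fun x => x + lam x • u
    let S : A → A := fun x => x + (2 * lam x) • u
    (∀ x y : A, T (x + y) = T x + T y) ∧ (∀ (a : F) (x : A), T (a • x) = a • T x) ∧
    (∀ x y : A, S (x + y) = S x + S y) ∧ (∀ (a : F) (x : A), S (a • x) = a • S x) ∧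
    Function.Bijective T ∧
    (∀ x : A, S (x ^ 2) = (T x) ^ 2) ∧
    T 1 = 1 + u ∧ T 1 ∉ Set.center A := by
  intro A u lam T S
  set v : A := ι F (Pi.single 1 1)
  set φ : A →ₐ[F] F := algebraMapInv
  have hu : φ u = 0 := algebraMapInv_ι _
  have hv : φ v = 0 := algebraMapInv_ι _
  have huv : u * v + v * u = 0 := ι_add_mul_swap _ _
  have hT : T = LinearMap.transvection φ.toLinearMap u := rfl
  have hS : S = LinearMap.transvection ((2 : F) • φ.toLinearMap) u := rfl
  have hT1 : T 1 = 1 + u := by simp [T, lam]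
  have hsq (x : A) : S (x ^ 2) = T x ^ 2 := by
    have hx : x ∈ Algebra.adjoin F {u, v} :=
      adjoin_ι_pi_single_fin_two (R := F) ▸ Algebra.mem_top
    exact (add_smul_sq_of_mul_add_mul φ (ι_sq_zero _) <| mul_add_mul_eq_of_mem_adjoin_pair φ
      (ι_sq_zero _) (ι_sq_zero _) huv hu hv hx).symm
  exact ⟨by simp [hT], by simp [hT], by simp [hS], by simp [hS],
    (LinearEquiv.transvection (f := φ.toLinearMap) hu).bijective, hsq, hT1,
    hT1 ▸ one_add_notMem_center hch huv ι_pi_single_mul_ι_pi_single_ne_zero⟩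
end
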